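/- arXiv:1201.4564 — 10 statements merged into one kernel-verified Lean document; each statement's English description precedes it below -/
import Mathlib

section
/- Let H ≥ 1, let M be a positive stochastic H×H real matrix, and suppose that the powers M^μ converge entrywise as μ → ∞ to a matrix M̄. Then for every pair of indices i, j, the entry (M(x))ᵢⱼ of M(x) := (exp(xM) − I)/(eˣ − 1) converges to M̄ᵢⱼ as x → +∞. -/
/-!
Expanding the exponential, `e⁻ˣ exp(xM) = ∑ₙ e⁻ˣ xⁿ/n! • Mⁿ` is an average of the powers of `M`
with Poisson weights. These weights are nonnegative, sum to `1`, and each of them tends to `0` as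
`x → ∞`, so (Silverman–Toeplitz) the averages of the convergent sequence `Mⁿ` tend to its limit
`M̄`. Finally `(eˣ - 1)⁻¹ (exp(xM) - 1) = (1 + (eˣ - 1)⁻¹) e⁻ˣ exp(xM) - (eˣ - 1)⁻¹ • 1`, and
`(eˣ - 1)⁻¹ → 0`.
-/

open Matrix Filter Topology Nat

section Toeplitz

variable {ι : Type*} {l : Filter ι} {w : ι → ℕ → ℝ}

theorem tendsto_tsum_mul_of_tendsto_zero (hw : ∀ᶠ t in l, (∀ n, 0 ≤ w t n) ∧ HasSum (w t) 1)
    (hcol : ∀ n, Tendsto (fun t => w t n) l (𝓝 0)) {c : ℕ → ℝ} (hc0 : ∀ n, 0 ≤ c n)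
    (hc : Tendsto c atTop (𝓝 0)) :
    Tendsto (fun t => ∑' n, w t n * c n) l (𝓝 0) := by
  obtain ⟨C, hC⟩ := hc.bddAbove_range
  refine tendsto_order.2 ⟨fun a ha => hw.mono fun t ht =>
    ha.trans_le (tsum_nonneg fun n => mul_nonneg (ht.1 n) (hc0 n)), fun ε hε => ?_⟩
  obtain ⟨N, hN⟩ := eventually_atTop.1 (hc.eventually (gt_mem_nhds (half_pos hε)))
  have hhead : Tendsto (fun t => ∑ n ∈ Finset.range N, w t n * c n) l (𝓝 0) := by
    simpa using tendsto_finsetSum _ fun n _ => (hcol n).mul_const (c n)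
  filter_upwards [hw, hhead.eventually (gt_mem_nhds (half_pos hε))] with t ⟨hwt0, hwt1⟩ hheadt
  have hsum : Summable (fun n => w t n * c n) :=
    hwt1.summable.mul_right C |>.of_nonneg_of_le (fun n => mul_nonneg (hwt0 n) (hc0 n))
      fun n => mul_le_mul_of_nonneg_left (hC ⟨n, rfl⟩) (hwt0 n)
  have hwtail : ∑' n, w t (n + N) ≤ 1 := by
    rw [← hwt1.tsum_eq, ← hwt1.summable.sum_add_tsum_nat_add N]
    exact le_add_of_nonneg_left (Finset.sum_nonneg fun n _ => hwt0 n)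
  have htail : ∑' n, w t (n + N) * c (n + N) ≤ ε / 2 :=
    calc ∑' n, w t (n + N) * c (n + N) ≤ ∑' n, w t (n + N) * (ε / 2) :=
          ((summable_nat_add_iff N).2 hsum).tsum_le_tsum
            (fun n => mul_le_mul_of_nonneg_left (hN _ le_add_self).le (hwt0 _))
            (((summable_nat_add_iff N).2 hwt1.summable).mul_right _)
      _ = (∑' n, w t (n + N)) * (ε / 2) := tsum_mul_right
      _ ≤ ε / 2 := mul_le_of_le_one_left (half_pos hε).le hwtail
  rw [← hsum.sum_add_tsum_nat_add N]
  linarith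

variable {E : Type*} [NormedAddCommGroup E] [NormedSpace ℝ E] [CompleteSpace E]

theorem tendsto_tsum_smul_of_tendsto (hw : ∀ᶠ t in l, (∀ n, 0 ≤ w t n) ∧ HasSum (w t) 1)
    (hcol : ∀ n, Tendsto (fun t => w t n) l (𝓝 0)) {a : ℕ → E} {L : E}
    (ha : Tendsto a atTop (𝓝 L)) :
    Tendsto (fun t => ∑' n, w t n • a n) l (𝓝 L) := by
  have hdist := tendsto_iff_norm_sub_tendsto_zero.1 ha
  obtain ⟨C, hC⟩ := hdist.bddAbove_range
  rw [tendsto_iff_norm_sub_tendsto_zero]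
  refine squeeze_zero' (.of_forall fun t => norm_nonneg _) ?_
    (tendsto_tsum_mul_of_tendsto_zero hw hcol (fun n => norm_nonneg _) hdist)
  filter_upwards [hw] with t ⟨hwt0, hwt1⟩
  have hnorm : ∀ n, ‖w t n • (a n - L)‖ = w t n * ‖a n - L‖ := fun n => by
    rw [norm_smul, Real.norm_of_nonneg (hwt0 n)]
  have hsum : Summable (fun n => ‖w t n • (a n - L)‖) := by
    simp only [hnorm]
    exact hwt1.summable.mul_right C |>.of_nonneg_of_le
      (fun n => mul_nonneg (hwt0 n) (norm_nonneg _))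
      fun n => mul_le_mul_of_nonneg_left (hC ⟨n, rfl⟩) (hwt0 n)
  have hsplit : ∑' n, w t n • a n = ∑' n, w t n • (a n - L) + L := by
    refine ((hsum.of_norm.hasSum.add (one_smul ℝ L ▸ hwt1.smul_const L)).congr_fun ?_).tsum_eq
    intro n
    rw [smul_sub, sub_add_cancel]
  rw [hsplit, add_sub_cancel_right]
  exact (norm_tsum_le_tsum_norm hsum).trans_eq (tsum_congr hnorm)

end Toeplitz

theorem hasSum_exp_neg_mul_pow_div_factorial (x : ℝ) :
    HasSum (fun n => Real.exp (-x) * x ^ n / n !) 1 := by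
  have h := (NormedSpace.expSeries_div_hasSum_exp x).mul_left (Real.exp (-x))
  rw [← Real.exp_eq_exp_ℝ, ← Real.exp_add, neg_add_cancel, Real.exp_zero] at h
  simpa only [mul_div_assoc] using h

theorem tendsto_exp_neg_mul_pow_div_factorial (n : ℕ) :
    Tendsto (fun x => Real.exp (-x) * x ^ n / n !) atTop (𝓝 0) := by
  simpa [mul_comm] using (Real.tendsto_pow_mul_exp_neg_atTop_nhds_zero n).div_const (n ! : ℝ)

theorem tendsto_tsum_exp_neg_mul_pow_div_factorial_smul {E : Type*} [NormedAddCommGroup E]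
    [NormedSpace ℝ E] [CompleteSpace E] {a : ℕ → E} {L : E} (ha : Tendsto a atTop (𝓝 L)) :
    Tendsto (fun x => ∑' n, (Real.exp (-x) * x ^ n / n !) • a n) atTop (𝓝 L) := by
  refine tendsto_tsum_smul_of_tendsto ?_ tendsto_exp_neg_mul_pow_div_factorial ha
  filter_upwards [eventually_ge_atTop 0] with x hx
  exact ⟨fun n => by positivity, hasSum_exp_neg_mul_pow_div_factorial x⟩

theorem Matrix.hasSum_exp_smul_apply {m : Type*} [Fintype m] [DecidableEq m] (A : Matrix m m ℝ)
    (x : ℝ) (i j : m) :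
    HasSum (fun n => x ^ n / n ! * (A ^ n) i j) (NormedSpace.exp (x • A) i j) := by
  have h : HasSum (fun n => (n !⁻¹ : ℝ) • (x • A) ^ n) (NormedSpace.exp (x • A)) :=
    open scoped Matrix.Norms.Operator in NormedSpace.exp_series_hasSum_exp' _
  convert Pi.hasSum.1 (Pi.hasSum.1 h i) j using 2 with n
  simp only [smul_pow, Matrix.smul_apply, smul_eq_mul]
  ring

theorem stmt1_general (H : ℕ) (M Mbar : Matrix (Fin H) (Fin H) ℝ)
    (hconv : ∀ i j, Tendsto (fun μ : ℕ => (M ^ μ) i j) atTop (nhds (Mbar i j)))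
    (i j : Fin H) :
    Tendsto (fun x : ℝ => ((Real.exp x - 1)⁻¹ • (NormedSpace.exp (x • M) - 1)) i j)
      atTop (nhds (Mbar i j)) := by
  have hmean : Tendsto (fun x => Real.exp (-x) * NormedSpace.exp (x • M) i j) atTop
      (𝓝 (Mbar i j)) := by
    refine (tendsto_tsum_exp_neg_mul_pow_div_factorial_smul (hconv i j)).congr fun x => ?_
    rw [← ((M.hasSum_exp_smul_apply x i j).mul_left _).tsum_eq]
    exact tsum_congr fun n => by rw [smul_eq_mul]; ring
  have hinv : Tendsto (fun x => (Real.exp x - 1)⁻¹) atTop (𝓝 0) :=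
    tendsto_inv_atTop_zero.comp (tendsto_atTop_add_const_right _ _ Real.tendsto_exp_atTop)
  have hlim := ((hinv.const_add 1).mul hmean).sub
    (hinv.mul_const ((1 : Matrix (Fin H) (Fin H) ℝ) i j))
  rw [add_zero, one_mul, zero_mul, sub_zero] at hlim
  refine hlim.congr' ?_
  filter_upwards [eventually_gt_atTop 0] with x hx
  have hE : Real.exp x - 1 ≠ 0 := (sub_pos.2 (Real.one_lt_exp_iff.2 hx)).ne'
  simp only [Matrix.smul_apply, Matrix.sub_apply, smul_eq_mul, Real.exp_neg]
  field_simp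
  ring

/-- If the powers of a positive stochastic matrix `M` converge entrywise to `Mbar`, then
each entry of `M(x) = (exp(xM) - I)/(eˣ - 1)` converges to the corresponding entry of `Mbar`
as `x → +∞`. -/
theorem stmt1 (H : ℕ) (hH : 1 ≤ H) (M Mbar : Matrix (Fin H) (Fin H) ℝ)
    (hpos : ∀ i j, 0 < M i j) (hrow : ∀ i, ∑ j, M i j = 1)
    (hconv : ∀ i j, Tendsto (fun μ : ℕ => (M ^ μ) i j) atTop (nhds (Mbar i j)))
    (i j : Fin H) :
    Tendsto (fun x : ℝ => ((Real.exp x - 1)⁻¹ • (NormedSpace.exp (x • M) - 1)) i j)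
      atTop (nhds (Mbar i j)) :=
  stmt1_general H M Mbar hconv i j
end

section
/- Let H ≥ 1, let M be a positive stochastic H×H real matrix whose powers M^μ converge entrywise to M̄, and suppose M satisfies the monotone convergence property. Fix indices i, j. Then for every x > 0: (1) if Mᵢⱼ > M̄ᵢⱼ, the function x ↦ (M(x))ᵢⱼ, where M(x) := (exp(xM) − I)/(eˣ − 1), has strictly negative derivative at x; (2) if Mᵢⱼ < M̄ᵢⱼ, this function has strictly positive derivative at x. -/
/-!
Write `aₙ = (Mⁿ)ᵢⱼ`. Expanding the exponential, `(eˣ - 1)²` times the derivative of `(M(x))ᵢⱼ` is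
`∑ₙ aₙ₊₁ cₙ(x)` with `cₙ(x) = (eˣ - 1) xⁿ/n! - eˣ xⁿ⁺¹/(n+1)!`. These coefficients sum to zero and
change sign exactly once, from negative to positive, at `n + 1 = x eˣ / (eˣ - 1)`. Monotone
convergence makes `n ↦ aₙ₊₁` antitone (resp. monotone), and convergence to `M̄ᵢⱼ ≠ Mᵢⱼ` makes it
non-constant, so pairing it with `c` gives a strictly negative (resp. positive) sum.
-/

open Matrix Filter

noncomputable def derivCoeff (x : ℝ) (n : ℕ) : ℝ :=
  (Real.exp x - 1) * (x ^ n / n.factorial) - Real.exp x * (x ^ (n + 1) / (n + 1).factorial)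

lemma hasSum_derivCoeff (x : ℝ) : HasSum (derivCoeff x) 0 := by
  have h₀ : HasSum (fun n : ℕ => x ^ n / n.factorial) (Real.exp x) := by
    rw [Real.exp_eq_exp_ℝ]; exact NormedSpace.expSeries_div_hasSum_exp x
  have h₁ : HasSum (fun n : ℕ => x ^ (n + 1) / (n + 1).factorial) (Real.exp x - 1) := by
    simpa using (hasSum_nat_add_iff' 1).2 h₀
  have h := (h₀.mul_left (Real.exp x - 1)).sub (h₁.mul_left (Real.exp x))
  rwa [mul_comm (Real.exp x - 1) (Real.exp x), sub_self] at h

lemma derivCoeff_eq_mul {x : ℝ} (hx : 0 < x) (n : ℕ) :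
    derivCoeff x n = x ^ n / n.factorial * (Real.exp x - 1) / (n + 1)
      * ((n + 1 : ℝ) - x * Real.exp x / (Real.exp x - 1)) := by
  have hne : Real.exp x - 1 ≠ 0 := (sub_pos.2 (Real.one_lt_exp_iff.2 hx)).ne'
  rw [derivCoeff, Nat.factorial_succ, Nat.cast_mul]
  field_simp
  push_cast
  ring

lemma one_lt_mul_exp_div_exp_sub_one {x : ℝ} (hx : 0 < x) :
    1 < x * Real.exp x / (Real.exp x - 1) := by
  have he : 1 < Real.exp x := Real.one_lt_exp_iff.2 hx
  rw [one_lt_div (by linarith)]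
  nlinarith [Real.add_one_lt_exp (neg_ne_zero.2 hx.ne'), Real.exp_neg x,
    mul_inv_cancel₀ (Real.exp_pos x).ne']

lemma exists_derivCoeff_sign_change {x : ℝ} (hx : 0 < x) :
    ∃ K : ℕ, derivCoeff x 0 < 0 ∧ (∀ n ≤ K, derivCoeff x n ≤ 0) ∧
      ∀ n, K < n → 0 < derivCoeff x n := by
  set θ := x * Real.exp x / (Real.exp x - 1)
  have hθ : 1 < θ := one_lt_mul_exp_div_exp_sub_one hx
  have hw : ∀ n : ℕ, 0 < x ^ n / n.factorial * (Real.exp x - 1) / (n + 1) := fun n => by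
    have : 0 < Real.exp x - 1 := sub_pos.2 (Real.one_lt_exp_iff.2 hx)
    positivity
  have hfloor : 1 ≤ ⌊θ⌋₊ := (Nat.le_floor_iff (by linarith)).2 (by exact_mod_cast hθ.le)
  refine ⟨⌊θ⌋₊ - 1, ?_, fun n hn => ?_, fun n hn => ?_⟩
  · rw [derivCoeff_eq_mul hx]
    exact mul_neg_of_pos_of_neg (hw 0) (by push_cast; linarith)
  · have : ((n + 1 : ℕ) : ℝ) ≤ θ := (Nat.le_floor_iff (by linarith)).1 (by omega)
    rw [derivCoeff_eq_mul hx]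
    exact mul_nonpos_of_nonneg_of_nonpos (hw n).le (by push_cast at this; linarith)
  · have : θ < ((n + 1 : ℕ) : ℝ) := (Nat.floor_lt (by linarith)).1 (by omega)
    rw [derivCoeff_eq_mul hx]
    exact mul_pos (hw n) (by push_cast at this; linarith)

lemma HasSum.neg_of_antitone_of_sign_change {b c : ℕ → ℝ} {s : ℝ} {K : ℕ}
    (hs : HasSum (fun n => b n * c n) s) (hc : HasSum c 0) (hb : Antitone b)
    (hb0 : ∃ m, b m < b 0) (hc0 : c 0 < 0) (hle : ∀ n ≤ K, c n ≤ 0)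
    (hgt : ∀ n, K < n → 0 < c n) : s < 0 := by
  have hterm : ∀ n, (b n - b K) * c n ≤ 0 := by
    intro n
    rcases le_or_gt n K with hn | hn
    · exact mul_nonpos_of_nonneg_of_nonpos (sub_nonneg.2 (hb hn)) (hle n hn)
    · exact mul_nonpos_of_nonpos_of_nonneg (sub_nonpos.2 (hb hn.le)) (hgt n hn).le
  have hstrict : ∃ n, (b n - b K) * c n < 0 := by
    obtain ⟨m, hm⟩ := hb0
    rcases (hb (Nat.zero_le K)).lt_or_eq with hK | hK
    · exact ⟨0, mul_neg_of_pos_of_neg (sub_pos.2 hK) hc0⟩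
    · have hmK : K < m := lt_of_not_ge fun h => (hb h).not_gt (hK ▸ hm)
      exact ⟨m, mul_neg_of_neg_of_pos (by linarith) (hgt m hmK)⟩
  obtain ⟨n, hn⟩ := hstrict
  -- as `∑ c = 0`, subtracting `b K` from `b` keeps the sum but makes every term nonpositive
  have hshift : HasSum (fun n => (b n - b K) * c n) s := by
    simpa [sub_mul] using hs.sub (hc.mul_left (b K))
  exact hasSum_lt hterm hn hshift hasSum_zero

lemma HasSum.pos_of_monotone_of_sign_change {b c : ℕ → ℝ} {s : ℝ} {K : ℕ}
    (hs : HasSum (fun n => b n * c n) s) (hc : HasSum c 0) (hb : Monotone b)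
    (hb0 : ∃ m, b 0 < b m) (hc0 : c 0 < 0) (hle : ∀ n ≤ K, c n ≤ 0)
    (hgt : ∀ n, K < n → 0 < c n) : 0 < s := by
  have hs' : HasSum (fun n => -b n * c n) (-s) := by simpa only [neg_mul] using hs.neg
  have := hs'.neg_of_antitone_of_sign_change hc hb.neg (by simpa using hb0) hc0 hle hgt
  linarith

namespace Matrix

variable {m : Type*} [Fintype m] [DecidableEq m]

lemma hasSum_exp_smul (M : Matrix m m ℝ) (x : ℝ) :
    HasSum (fun n : ℕ => (n.factorial⁻¹ : ℝ) • (x • M) ^ n) (NormedSpace.exp (x • M)) := by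
  -- `exp` and the topology do not depend on the norm, so any normed-algebra norm will do
  let : NormedRing (Matrix m m ℝ) := Matrix.linftyOpNormedRing
  let : NormedAlgebra ℝ (Matrix m m ℝ) := Matrix.linftyOpNormedAlgebra
  exact NormedSpace.exp_series_hasSum_exp' (x • M)

lemma hasDerivAt_exp_smul_apply (M : Matrix m m ℝ) (i j : m) (x : ℝ) :
    HasDerivAt (fun y : ℝ => NormedSpace.exp (y • M) i j)
      ((NormedSpace.exp (x • M) * M) i j) x := by
  let : NormedRing (Matrix m m ℝ) := Matrix.linftyOpNormedRing
  let : NormedAlgebra ℝ (Matrix m m ℝ) := Matrix.linftyOpNormedAlgebra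
  exact (entryLinearMap ℝ ℝ i j).toContinuousLinearMap.hasFDerivAt.comp_hasDerivAt x
    (hasDerivAt_exp_smul_const M x)

lemma hasSum_exp_smul_apply_s2 (M : Matrix m m ℝ) (i j : m) (x : ℝ) :
    HasSum (fun n : ℕ => x ^ n / n.factorial * (M ^ n) i j) (NormedSpace.exp (x • M) i j) := by
  convert Pi.hasSum.1 (Pi.hasSum.1 (hasSum_exp_smul M x) i) j using 2 with n
  simp only [smul_pow, Matrix.smul_apply, smul_eq_mul]
  ring

lemma hasSum_exp_smul_mul_apply (M : Matrix m m ℝ) (i j : m) (x : ℝ) :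
    HasSum (fun n : ℕ => x ^ n / n.factorial * (M ^ (n + 1)) i j)
      ((NormedSpace.exp (x • M) * M) i j) := by
  convert Pi.hasSum.1 (Pi.hasSum.1 ((hasSum_exp_smul M x).mul_right M) i) j using 2 with n
  simp only [smul_pow, smul_mul_assoc, ← pow_succ, Matrix.smul_apply, smul_eq_mul]
  ring

lemma hasSum_exp_smul_sub_one_apply (M : Matrix m m ℝ) (i j : m) (x : ℝ) :
    HasSum (fun n : ℕ => x ^ (n + 1) / (n + 1).factorial * (M ^ (n + 1)) i j)
      ((NormedSpace.exp (x • M) - 1) i j) := by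
  simpa using (hasSum_nat_add_iff' 1).2 (hasSum_exp_smul_apply_s2 M i j x)

lemma hasDerivAt_normalized_exp_apply (M : Matrix m m ℝ) (i j : m) {x : ℝ} (hx : x ≠ 0) :
    HasDerivAt (fun y : ℝ => ((Real.exp y - 1)⁻¹ • (NormedSpace.exp (y • M) - 1)) i j)
      (((Real.exp x - 1) * (NormedSpace.exp (x • M) * M) i j
        - Real.exp x * (NormedSpace.exp (x • M) - 1) i j) / (Real.exp x - 1) ^ 2) x := by
  have hne : Real.exp x - 1 ≠ 0 := sub_ne_zero.2 (mt (Real.exp_eq_one_iff x).1 hx)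
  have h := (((Real.hasDerivAt_exp x).sub_const 1).inv hne).mul
    ((hasDerivAt_exp_smul_apply M i j x).sub_const ((1 : Matrix m m ℝ) i j))
  have hfun : (fun y : ℝ => ((Real.exp y - 1)⁻¹ • (NormedSpace.exp (y • M) - 1)) i j)
      = fun y => (Real.exp y - 1)⁻¹ * (NormedSpace.exp (y • M) i j - (1 : Matrix m m ℝ) i j) := rfl
  rw [hfun, Matrix.sub_apply]
  refine h.congr_deriv ?_
  rw [Pi.inv_apply]
  field_simp
  ring

lemma hasSum_mul_derivCoeff (M : Matrix m m ℝ) (i j : m) (x : ℝ) :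
    HasSum (fun n => (M ^ (n + 1)) i j * derivCoeff x n)
      ((Real.exp x - 1) * (NormedSpace.exp (x • M) * M) i j
        - Real.exp x * (NormedSpace.exp (x • M) - 1) i j) := by
  refine (((hasSum_exp_smul_mul_apply M i j x).mul_left (Real.exp x - 1)).sub
    ((hasSum_exp_smul_sub_one_apply M i j x).mul_left (Real.exp x))).congr_fun fun n => ?_
  unfold derivCoeff
  ring

end Matrix

theorem stmt2_general (H : ℕ) (M Mbar : Matrix (Fin H) (Fin H) ℝ)
    (hconv : ∀ i j, Tendsto (fun μ : ℕ => (M ^ μ) i j) atTop (nhds (Mbar i j)))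
    (hmc : ∀ i j, ∀ μ : ℕ, 1 ≤ μ →
      (Mbar i j < M i j →
        Mbar i j ≤ (M ^ (μ + 1)) i j ∧ (M ^ (μ + 1)) i j ≤ (M ^ μ) i j ∧ (M ^ μ) i j ≤ M i j) ∧
      (M i j < Mbar i j →
        M i j ≤ (M ^ μ) i j ∧ (M ^ μ) i j ≤ (M ^ (μ + 1)) i j ∧ (M ^ (μ + 1)) i j ≤ Mbar i j))
    (i j : Fin H) (x : ℝ) (hx : 0 < x) :
    (Mbar i j < M i j → ∃ d : ℝ, d < 0 ∧
      HasDerivAt (fun y : ℝ => ((Real.exp y - 1)⁻¹ • (NormedSpace.exp (y • M) - 1)) i j) d x) ∧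
    (M i j < Mbar i j → ∃ d : ℝ, 0 < d ∧
      HasDerivAt (fun y : ℝ => ((Real.exp y - 1)⁻¹ • (NormedSpace.exp (y • M) - 1)) i j) d x) := by
  have hderiv := Matrix.hasDerivAt_normalized_exp_apply M i j hx.ne'
  have hsum := Matrix.hasSum_mul_derivCoeff M i j x
  obtain ⟨K, hc0, hle, hgt⟩ := exists_derivCoeff_sign_change hx
  have hsq : 0 < (Real.exp x - 1) ^ 2 := pow_pos (sub_pos.2 (Real.one_lt_exp_iff.2 hx)) 2
  have htendsto := (hconv i j).comp (tendsto_add_atTop_nat 1)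
  refine ⟨fun h => ⟨_, div_neg_of_neg_of_pos ?_ hsq, hderiv⟩,
    fun h => ⟨_, div_pos ?_ hsq, hderiv⟩⟩
  · refine hsum.neg_of_antitone_of_sign_change (hasSum_derivCoeff x)
      (antitone_nat_of_succ_le fun n => ((hmc i j (n + 1) n.succ_pos).1 h).2.1) ?_ hc0 hle hgt
    simpa using (htendsto.eventually_lt_const h).exists
  · refine hsum.pos_of_monotone_of_sign_change (hasSum_derivCoeff x)
      (monotone_nat_of_le_succ fun n => ((hmc i j (n + 1) n.succ_pos).2 h).2.1) ?_ hc0 hle hgt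
    simpa using (htendsto.eventually_const_lt h).exists

/-- Under the monotone convergence property, each entry of `M(x) = (exp(xM) - I)/(eˣ - 1)`
has a strictly negative (resp. positive) derivative at every `x > 0` when `Mᵢⱼ > M̄ᵢⱼ`
(resp. `Mᵢⱼ < M̄ᵢⱼ`). -/
theorem stmt2 (H : ℕ) (hH : 1 ≤ H) (M Mbar : Matrix (Fin H) (Fin H) ℝ)
    (hpos : ∀ i j, 0 < M i j) (hrow : ∀ i, ∑ j, M i j = 1)
    (hconv : ∀ i j, Tendsto (fun μ : ℕ => (M ^ μ) i j) atTop (nhds (Mbar i j)))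
    (hmc : ∀ i j, ∀ μ : ℕ, 1 ≤ μ →
      (Mbar i j < M i j →
        Mbar i j ≤ (M ^ (μ + 1)) i j ∧ (M ^ (μ + 1)) i j ≤ (M ^ μ) i j ∧ (M ^ μ) i j ≤ M i j) ∧
      (M i j < Mbar i j →
        M i j ≤ (M ^ μ) i j ∧ (M ^ μ) i j ≤ (M ^ (μ + 1)) i j ∧ (M ^ (μ + 1)) i j ≤ Mbar i j))
    (i j : Fin H) (x : ℝ) (hx : 0 < x) :
    (Mbar i j < M i j → ∃ d : ℝ, d < 0 ∧
      HasDerivAt (fun y : ℝ => ((Real.exp y - 1)⁻¹ • (NormedSpace.exp (y • M) - 1)) i j) d x) ∧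
    (M i j < Mbar i j → ∃ d : ℝ, 0 < d ∧
      HasDerivAt (fun y : ℝ => ((Real.exp y - 1)⁻¹ • (NormedSpace.exp (y • M) - 1)) i j) d x) :=
  stmt2_general H M Mbar hconv hmc i j x hx
end

section
/- Let p, q ∈ (0,1) with p + q ≥ 1 and let M be the 2×2 matrix with rows (p, 1−p) and (1−q, q). Let u = (1−q)/((1−p)+(1−q)) and let M̄ be the 2×2 matrix with both rows equal to (u, 1−u). Then M^μ converges entrywise to M̄ as μ → ∞, and M satisfies the monotone convergence property: for all indices i, j and all μ ≥ 1, if Mᵢⱼ > M̄ᵢⱼ then Mᵢⱼ ≥ (M^μ)ᵢⱼ ≥ (M^{μ+1})ᵢⱼ ≥ M̄ᵢⱼ, and if Mᵢⱼ < M̄ᵢⱼ then Mᵢⱼ ≤ (M^μ)ᵢⱼ ≤ (M^{μ+1})ᵢⱼ ≤ M̄ᵢⱼ. -/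
/-!
`M̄` is idempotent and `M = M̄ + r (1 - M̄)` with `r = p + q - 1 ∈ [0, 1)`, so
`M ^ μ = M̄ + r ^ μ (1 - M̄)`. Each entry of `M ^ μ` is therefore `b + r ^ μ c`, which tends to
`b = M̄ᵢⱼ` and, since `r ≥ 0`, approaches it monotonically from the side of `Mᵢⱼ = b + r c`.
-/

open Matrix Filter

theorem IsIdempotentElem.add_smul_one_sub_pow {R A : Type*} [CommSemiring R] [Ring A]
    [Algebra R A] {e : A} (he : IsIdempotentElem e) (r : R) (n : ℕ) :
    (e + r • (1 - e)) ^ n = e + r ^ n • (1 - e) := by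
  induction n with
  | zero => simp
  | succ n ih =>
    rw [pow_succ, ih]
    simp only [add_mul, mul_add, smul_mul_assoc, mul_smul_comm, smul_smul, he.eq,
      he.one_sub.eq, he.mul_one_sub_self, he.one_sub_mul_self, smul_zero, add_zero, zero_add,
      pow_succ']

theorem Matrix.isIdempotentElem_of_rows_eq {n R : Type*} [Fintype n] [Semiring R]
    (v : n → R) (hv : ∑ j, v j = 1) : IsIdempotentElem (Matrix.of fun _ : n => v) := by
  ext i j
  simp [mul_apply, ← Finset.sum_mul, hv]

theorem add_pow_mul_chain (b c r : ℝ) (hr0 : 0 ≤ r) (hr1 : r ≤ 1) {μ : ℕ} (hμ : 1 ≤ μ) :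
    (b < b + r * c →
      b ≤ b + r ^ (μ + 1) * c ∧ b + r ^ (μ + 1) * c ≤ b + r ^ μ * c ∧ b + r ^ μ * c ≤ b + r * c) ∧
    (b + r * c < b →
      b + r * c ≤ b + r ^ μ * c ∧ b + r ^ μ * c ≤ b + r ^ (μ + 1) * c ∧ b + r ^ (μ + 1) * c ≤ b) := by
  have h0 : 0 ≤ r ^ (μ + 1) := pow_nonneg hr0 _
  have h1 : r ^ (μ + 1) ≤ r ^ μ := pow_le_pow_of_le_one hr0 hr1 μ.le_succ
  have h2 : r ^ μ ≤ r := by simpa using pow_le_pow_of_le_one hr0 hr1 hμ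
  constructor
  · intro h
    have hc : 0 ≤ c := (pos_of_mul_pos_right (by linarith) hr0).le
    refine ⟨?_, ?_, ?_⟩ <;> nlinarith
  · intro h
    have hc : c ≤ 0 := (neg_of_mul_neg_right (by linarith) hr0).le
    refine ⟨?_, ?_, ?_⟩ <;> nlinarith

/-- A `2×2` stochastic matrix with `p + q ≥ 1` converges to its stationary matrix and
satisfies the monotone convergence property. -/
theorem stmt3 (p q : ℝ) (hp : p ∈ Set.Ioo (0 : ℝ) 1) (hq : q ∈ Set.Ioo (0 : ℝ) 1)
    (hpq : 1 ≤ p + q) :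
    let M : Matrix (Fin 2) (Fin 2) ℝ := !![p, 1 - p; 1 - q, q]
    let u : ℝ := (1 - q) / ((1 - p) + (1 - q))
    let Mbar : Matrix (Fin 2) (Fin 2) ℝ := !![u, 1 - u; u, 1 - u]
    (∀ i j, Tendsto (fun μ : ℕ => (M ^ μ) i j) atTop (nhds (Mbar i j))) ∧
    (∀ i j, ∀ μ : ℕ, 1 ≤ μ →
      (Mbar i j < M i j →
        Mbar i j ≤ (M ^ (μ + 1)) i j ∧ (M ^ (μ + 1)) i j ≤ (M ^ μ) i j ∧ (M ^ μ) i j ≤ M i j) ∧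
      (M i j < Mbar i j →
        M i j ≤ (M ^ μ) i j ∧ (M ^ μ) i j ≤ (M ^ (μ + 1)) i j ∧ (M ^ (μ + 1)) i j ≤ Mbar i j)) := by
  intro M u Mbar
  set r := p + q - 1
  have hs : (1 - p) + (1 - q) ≠ 0 := by linarith [hp.2, hq.2]
  have hr0 : 0 ≤ r := by linarith
  have hr1 : r < 1 := by linarith [hp.2, hq.2]
  have hMbar : IsIdempotentElem Mbar := by
    convert Matrix.isIdempotentElem_of_rows_eq ![u, 1 - u] (by simp) using 1
    ext i j
    fin_cases i <;> fin_cases j <;> rfl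
  have hM : M = Mbar + r • (1 - Mbar) := by
    ext i j
    fin_cases i <;> fin_cases j <;> simp [M, Mbar, u, r] <;> field_simp <;> ring
  have hpow : ∀ μ i j, (M ^ μ) i j = Mbar i j + r ^ μ * (1 - Mbar) i j := by
    intro μ i j
    rw [hM, hMbar.add_smul_one_sub_pow]
    rfl
  have hM1 : ∀ i j, M i j = Mbar i j + r * (1 - Mbar) i j := by simpa using hpow 1
  refine ⟨fun i j => ?_, fun i j μ hμ => ?_⟩
  · simp only [hpow]
    simpa using ((tendsto_pow_atTop_nhds_zero_of_lt_one hr0 hr1).mul_const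
      ((1 - Mbar) i j)).const_add (Mbar i j)
  · rw [hpow, hpow, hM1]
    exact add_pow_mul_chain _ _ r hr0 hr1.le hμ
end

section
/- Let B be an H×H real matrix, let n > 0, m_r > 0, m_s > 0 be reals, and let t₀ > 0. Define Π(t) = n·(m_r/m_s)·(exp(m_s·log(t/t₀)·B) − I) for t ≥ t₀. Then Π(t₀) = 0 and for every t > 0 the function Π has derivative Π′(t) = (n·m_r/t)·B + (m_s/t)·B·Π(t). Moreover, Π is the unique continuous matrix-valued function on [t₀, ∞) with Π(t₀) = 0 satisfying this differential equation at every t > t₀. -/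
/-!
With `g t = ms * log (t / t₀)` and `c = n * mr / ms`, the equation says that `V = Φ + c • 1`
solves the linear equation `V' = g' • (B * V)`. Its solutions on `[t₀, ∞)` are
`exp ((g t - g t₀) • B) * V t₀`, because `exp (-g • B) * V` has derivative zero on `(t₀, ∞)` and
is continuous on `[t₀, ∞)`. Under the `L∞` operator norm the matrices form a Banach algebra, in
which the entrywise hypotheses become hypotheses on matrix-valued functions.
-/

open Matrix Set NormedSpace

section
variable {E : Type*} [NormedAddCommGroup E] [NormedSpace ℝ E]

theorem constant_of_hasDerivAt_Ioi_zero {f : ℝ → E} {a : ℝ} (hcont : ContinuousOn f (Ici a))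
    (hderiv : ∀ x, a < x → HasDerivAt f 0 x) : ∀ x ∈ Ici a, f x = f a := by
  have hconst : EqOn f (fun _ => f (a + 1)) (Ioi a) := fun x hx =>
    isOpen_Ioi.is_const_of_deriv_eq_zero isPreconnected_Ioi
      (fun y hy => (hderiv y hy).differentiableAt.differentiableWithinAt)
      (fun y hy => (hderiv y hy).deriv) hx (lt_add_one a)
  have hext := hconst.of_subset_closure hcont continuousOn_const Ioi_subset_Ici_self
    (closure_Ioi a).ge
  intro x hx
  rw [hext hx, hext self_mem_Ici]

end

section
variable {𝔸 : Type*} [NormedRing 𝔸] [NormedAlgebra ℝ 𝔸] [CompleteSpace 𝔸]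

theorem exp_add_smul (x y : ℝ) (B : 𝔸) : exp ((x + y) • B) = exp (x • B) * exp (y • B) := by
  have h := expSeries_radius_eq_top ℝ 𝔸
  rw [add_smul, exp_add_of_commute_of_mem_ball (𝕂 := ℝ)
    (((Commute.refl B).smul_left x).smul_right y) (by simp [h]) (by simp [h])]

theorem hasDerivAt_exp_smul_comp {g : ℝ → ℝ} {g' t : ℝ} (B : 𝔸) (hg : HasDerivAt g g' t) :
    HasDerivAt (fun s => exp (g s • B)) (g' • (B * exp (g t • B))) t :=
  (hasDerivAt_exp_smul_const' B (g t)).scomp t hg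

theorem eq_exp_smul_mul_of_hasDerivAt {B : 𝔸} {g g' : ℝ → ℝ} {V : ℝ → 𝔸} {a : ℝ}
    (hg : ∀ t ∈ Ici a, HasDerivAt g (g' t) t) (hVc : ContinuousOn V (Ici a))
    (hV : ∀ t, a < t → HasDerivAt V (g' t • (B * V t)) t) :
    ∀ t ∈ Ici a, V t = exp ((g t - g a) • B) * V a := by
  set W : ℝ → 𝔸 := fun s => exp (-g s • B) * V s with hW
  have hW' : ∀ t, a < t → HasDerivAt W 0 t := by
    intro t ht
    convert (hasDerivAt_exp_smul_comp B (hg t ht.le).fun_neg).fun_mul (hV t ht) using 1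
    have hcomm : Commute B (exp (-g t • B)) := ((Commute.refl B).smul_right _).exp_right
    rw [hcomm.eq, mul_smul_comm, smul_mul_assoc, mul_assoc, neg_smul, neg_add_cancel]
  have hWc : ContinuousOn W (Ici a) := ContinuousOn.mul
    (fun t ht => (hasDerivAt_exp_smul_comp B (hg t ht).fun_neg).continuousAt.continuousWithinAt)
    hVc
  intro t ht
  calc V t = exp (g t • B) * W t := by
        rw [hW, ← mul_assoc, ← exp_add_smul, add_neg_cancel, zero_smul, exp_zero, one_mul]
    _ = exp (g t • B) * W a := by rw [constant_of_hasDerivAt_Ioi_zero hWc hW' t ht]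
    _ = exp ((g t - g a) • B) * V a := by rw [hW, ← mul_assoc, ← exp_add_smul, sub_eq_add_neg]

end

namespace Matrix

open scoped Matrix.Norms.Operator

variable {m n : Type*} [Fintype m] [Fintype n]

theorem hasDerivAt_iff_forall_apply {f : ℝ → Matrix m n ℝ} {f' : Matrix m n ℝ} {t : ℝ} :
    HasDerivAt f f' t ↔ ∀ i j, HasDerivAt (fun s => f s i j) (f' i j) t := by
  refine ⟨fun hf i j => ?_, fun hf => ?_⟩
  · exact (entryLinearMap ℝ ℝ i j).toContinuousLinearMap.hasFDerivAt.comp_hasDerivAt t hf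
  · classical
    have hsum := HasDerivAt.fun_sum fun i (_ : i ∈ Finset.univ) =>
      HasDerivAt.fun_sum fun j (_ : j ∈ Finset.univ) => (hf i j).smul_const (single i j (1 : ℝ))
    simp only [smul_single, smul_eq_mul, mul_one] at hsum
    rw [funext fun s => matrix_eq_sum_single (f s), matrix_eq_sum_single f']
    exact hsum

variable [DecidableEq m]

theorem hasDerivAt_exp_smul_comp_apply {g : ℝ → ℝ} {g' t : ℝ} (B : Matrix m m ℝ)
    (hg : HasDerivAt g g' t) (i j : m) :
    HasDerivAt (fun s => exp (g s • B) i j) ((g' • (B * exp (g t • B))) i j) t :=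
  hasDerivAt_iff_forall_apply.mp (hasDerivAt_exp_smul_comp B hg) i j

theorem eq_exp_smul_mul_of_hasDerivAt_apply {B : Matrix m m ℝ} {g g' : ℝ → ℝ}
    {V : ℝ → Matrix m m ℝ} {a : ℝ} (hg : ∀ t ∈ Ici a, HasDerivAt g (g' t) t)
    (hVc : ∀ i j, ContinuousOn (fun s => V s i j) (Ici a))
    (hV : ∀ t, a < t → ∀ i j, HasDerivAt (fun s => V s i j) ((g' t • (B * V t)) i j) t) :
    ∀ t ∈ Ici a, V t = exp ((g t - g a) • B) * V a :=
  eq_exp_smul_mul_of_hasDerivAt hg (continuousOn_pi.2 fun i => continuousOn_pi.2 (hVc i))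
    fun t ht => hasDerivAt_iff_forall_apply.2 (hV t ht)

end Matrix

theorem stmt4_general (H : ℕ) (B : Matrix (Fin H) (Fin H) ℝ) (n mr ms t₀ : ℝ)
    (hms : 0 < ms) (ht₀ : 0 < t₀) :
    let Φ : ℝ → Matrix (Fin H) (Fin H) ℝ := fun t =>
      (n * (mr / ms)) • (NormedSpace.exp ((ms * Real.log (t / t₀)) • B) - 1)
    (Φ t₀ = 0) ∧
    (∀ t : ℝ, 0 < t → ∀ i j, HasDerivAt (fun s : ℝ => Φ s i j)
        (((n * mr / t) • B + (ms / t) • (B * Φ t)) i j) t) ∧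
    (∀ Ψ : ℝ → Matrix (Fin H) (Fin H) ℝ,
      (∀ i j, ContinuousOn (fun s : ℝ => Ψ s i j) (Set.Ici t₀)) →
      Ψ t₀ = 0 →
      (∀ t : ℝ, t₀ < t → ∀ i j, HasDerivAt (fun s : ℝ => Ψ s i j)
        (((n * mr / t) • B + (ms / t) • (B * Ψ t)) i j) t) →
      ∀ t ∈ Set.Ici t₀, Ψ t = Φ t) := by
  intro Φ
  set c := n * (mr / ms)
  set g : ℝ → ℝ := fun t => ms * Real.log (t / t₀)
  have hg : ∀ t, 0 < t → HasDerivAt g (ms / t) t := fun t ht => by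
    refine ((((hasDerivAt_id t).div_const t₀).log (by positivity)).const_mul ms).congr_deriv ?_
    field_simp
    simp [ht.ne']
  have hg₀ : g t₀ = 0 := by simp [g, div_self ht₀.ne']
  have hΦ : ∀ t, Φ t + c • 1 = c • exp (g t • B) := fun t => by simp [Φ, c, g, smul_sub]
  have hrhs : ∀ t (M : Matrix (Fin H) (Fin H) ℝ),
      (n * mr / t) • B + (ms / t) • (B * M) = (ms / t) • (B * (M + c • 1)) := fun t M => by
    rw [Matrix.mul_add, mul_smul_comm, Matrix.mul_one, smul_add, smul_smul, add_comm]
    congr 2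
    simp only [c]
    field_simp
  refine ⟨by simp [Φ], fun t ht i j => ?_, fun Ψ hΨc hΨ₀ hΨ' t ht => ?_⟩
  · rw [hrhs, hΦ]
    refine (((hasDerivAt_exp_smul_comp_apply B (hg t ht) i j).sub_const
      ((1 : Matrix (Fin H) (Fin H) ℝ) i j)).const_mul c).congr_deriv ?_
    simp only [Matrix.smul_apply, Matrix.mul_smul, smul_eq_mul]
    ring
  · have hV := eq_exp_smul_mul_of_hasDerivAt_apply (V := fun s => Ψ s + c • 1)
      (fun s hs => hg s (ht₀.trans_le hs)) (fun i j => (hΨc i j).add continuousOn_const)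
      (fun s hs i j => by rw [← hrhs]; exact (hΨ' s hs i j).add_const _) t ht
    rw [hΨ₀, hg₀, sub_zero, zero_add, mul_smul_comm, Matrix.mul_one, ← hΦ] at hV
    exact add_right_cancel hV

/-- `Π(t) = n·(m_r/m_s)·(exp(m_s·log(t/t₀)·B) − I)` vanishes at `t₀`, solves the mean-field
ODE `Π′(t) = (n·m_r/t)·B + (m_s/t)·B·Π(t)` at every `t > 0`, and is the unique continuous
solution on `[t₀, ∞)` with `Π(t₀) = 0`. -/
theorem stmt4 (H : ℕ) (B : Matrix (Fin H) (Fin H) ℝ) (n mr ms t₀ : ℝ)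
    (hn : 0 < n) (hmr : 0 < mr) (hms : 0 < ms) (ht₀ : 0 < t₀) :
    let Φ : ℝ → Matrix (Fin H) (Fin H) ℝ := fun t =>
      (n * (mr / ms)) • (NormedSpace.exp ((ms * Real.log (t / t₀)) • B) - 1)
    (Φ t₀ = 0) ∧
    (∀ t : ℝ, 0 < t → ∀ i j, HasDerivAt (fun s : ℝ => Φ s i j)
        (((n * mr / t) • B + (ms / t) • (B * Φ t)) i j) t) ∧
    (∀ Ψ : ℝ → Matrix (Fin H) (Fin H) ℝ,
      (∀ i j, ContinuousOn (fun s : ℝ => Ψ s i j) (Set.Ici t₀)) →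
      Ψ t₀ = 0 →
      (∀ t : ℝ, t₀ < t → ∀ i j, HasDerivAt (fun s : ℝ => Ψ s i j)
        (((n * mr / t) • B + (ms / t) • (B * Ψ t)) i j) t) →
      ∀ t ∈ Set.Ici t₀, Ψ t = Φ t) :=
  stmt4_general H B n mr ms t₀ hms ht₀
end

section
/- Let A be a positive stochastic H×H real matrix whose powers A^μ converge entrywise to M̄, let Q be a diagonal H×H matrix with strictly positive diagonal entries, let m_s ∈ (0,1), and let t₀ > 0. Then, entrywise, the matrix [exp(m_s·log(t/t₀)·(Q·A·Q⁻¹)) − I] / ((t/t₀)^{m_s} − 1) converges to Q·M̄·Q⁻¹ as t → +∞. -/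
/-!
If `aᵏ → p`, then `a p = p a = p² = p`, so `a = p + n` with `p n = n p = 0` and `nᵏ = aᵏ - p → 0`
for `k ≥ 1`. Hence `exp (c a) - 1 = (eᶜ - 1) p + (exp (c n) - 1)`, and a geometric bound
`‖nᵏ‖ ≤ K ρᵏ` with `ρ < 1` gives `‖exp (c n)‖ ≤ K e^{ρ c} = o(eᶜ)`. The theorem is the case
`a = Q A Q⁻¹`, `c = m_s log (t / t₀)`, for which `eᶜ = (t / t₀)^{m_s}`.
-/

open Matrix Filter Topology

theorem pow_mul_eq_of_mul_eq {M : Type*} [Monoid M] {a p : M} (h : a * p = p) (n : ℕ) :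
    a ^ n * p = p := by
  induction n with
  | zero => rw [pow_zero, one_mul]
  | succ n ih => rw [pow_succ', mul_assoc, ih, h]

theorem sub_pow_succ_of_mul_eq {R : Type*} [Ring R] {a p : R} (hap : a * p = p) (hpa : p * a = p)
    (hp : IsIdempotentElem p) (k : ℕ) : (a - p) ^ (k + 1) = a ^ (k + 1) - p := by
  induction k with
  | zero => simp
  | succ k ih =>
    rw [pow_succ, ih, sub_mul, mul_sub, mul_sub, ← pow_succ, pow_mul_eq_of_mul_eq hap, hpa, hp.eq]
    abel

section TopologicalRing

variable {R : Type*} [Ring R] [TopologicalSpace R] [IsTopologicalRing R] [T2Space R] {a p : R}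

theorem mul_eq_of_tendsto_pow (h : Tendsto (a ^ ·) atTop (𝓝 p)) : a * p = p :=
  tendsto_nhds_unique (h.const_mul a) <| by
    simpa only [Function.comp_def, ← pow_succ'] using h.comp (tendsto_add_atTop_nat 1)

theorem mul_eq_of_tendsto_pow' (h : Tendsto (a ^ ·) atTop (𝓝 p)) : p * a = p :=
  tendsto_nhds_unique (h.mul_const a) <| by
    simpa only [Function.comp_def, ← pow_succ] using h.comp (tendsto_add_atTop_nat 1)

theorem isIdempotentElem_of_tendsto_pow (h : Tendsto (a ^ ·) atTop (𝓝 p)) :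
    IsIdempotentElem p :=
  tendsto_nhds_unique (h.mul h) <| by
    simpa only [Function.comp_def, id, ← pow_add] using
      h.comp (tendsto_id.atTop_add_atTop tendsto_id)

theorem tendsto_sub_pow_zero_of_tendsto_pow (h : Tendsto (a ^ ·) atTop (𝓝 p)) :
    Tendsto ((a - p) ^ ·) atTop (𝓝 0) := by
  have hlim : Tendsto (fun k => a ^ (k + 1) - p) atTop (𝓝 0) := by
    simpa only [Function.comp_def, sub_self] using (h.comp (tendsto_add_atTop_nat 1)).sub_const p
  rw [← tendsto_add_atTop_iff_nat 1]
  simpa only [sub_pow_succ_of_mul_eq (mul_eq_of_tendsto_pow h) (mul_eq_of_tendsto_pow' h)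
    (isIdempotentElem_of_tendsto_pow h)] using hlim

end TopologicalRing

section NormedRing

variable {𝔸 : Type*} [NormedRing 𝔸]

theorem norm_pow_mul_le (a b : 𝔸) (n : ℕ) : ‖a ^ n * b‖ ≤ ‖a‖ ^ n * ‖b‖ := by
  induction n with
  | zero => simp
  | succ n ih =>
    calc ‖a ^ (n + 1) * b‖ = ‖a * (a ^ n * b)‖ := by rw [pow_succ', mul_assoc]
      _ ≤ ‖a‖ * (‖a‖ ^ n * ‖b‖) := (norm_mul_le _ _).trans (by gcongr)
      _ = ‖a‖ ^ (n + 1) * ‖b‖ := by ring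

theorem exists_norm_pow_le_geometric_of_tendsto_pow_zero {x : 𝔸}
    (h : Tendsto (x ^ ·) atTop (𝓝 0)) : ∃ K ρ : ℝ, ρ < 1 ∧ ∀ k, ‖x ^ k‖ ≤ K * ρ ^ k := by
  -- Once `‖x ^ q‖ ≤ 1 / 2`, split `k = q * (k / q) + k % q` and take `ρ = (1 / 2) ^ (1 / q)`.
  obtain ⟨m, hm⟩ := ((tendsto_zero_iff_norm_tendsto_zero.1 h).eventually
    (gt_mem_nhds (by norm_num : (0 : ℝ) < 1 / 2))).exists_forall_of_atTop
  set q := m + 1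
  have hq : ‖x ^ q‖ ≤ 1 / 2 := by simpa using (hm q (by omega)).le
  set ρ : ℝ := (1 / 2) ^ (q : ℝ)⁻¹
  have hρ : 0 < ρ := by positivity
  have hρ1 : ρ < 1 := Real.rpow_lt_one (by norm_num) (by norm_num) (by positivity)
  have hρq : ρ ^ q = 1 / 2 := by
    rw [← Real.rpow_natCast, ← Real.rpow_mul (by norm_num), inv_mul_cancel₀ (by positivity),
      Real.rpow_one]
  set S := ∑ r ∈ Finset.range q, ‖x ^ r‖
  refine ⟨2 * S, ρ, hρ1, fun k => ?_⟩
  have hrem : ‖x ^ (k % q)‖ ≤ S :=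
    Finset.single_le_sum (fun r _ => norm_nonneg (x ^ r))
      (Finset.mem_range.2 (Nat.mod_lt k (Nat.succ_pos m)))
  have hρk : (1 / 2 : ℝ) ^ (k / q) ≤ 2 * ρ ^ k := by
    calc (1 / 2 : ℝ) ^ (k / q) = 2 * (ρ ^ (q * (k / q)) * ρ ^ q) := by
          rw [pow_mul, hρq]; ring
      _ ≤ 2 * (ρ ^ (q * (k / q)) * ρ ^ (k % q)) := by
          gcongr 2 * (ρ ^ (q * (k / q)) * ?_)
          exact pow_le_pow_of_le_one hρ.le hρ1.le (Nat.mod_lt k (Nat.succ_pos m)).le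
      _ = 2 * ρ ^ k := by rw [← pow_add, Nat.div_add_mod]
  calc ‖x ^ k‖ = ‖(x ^ q) ^ (k / q) * x ^ (k % q)‖ := by
        rw [← pow_mul, ← pow_add, Nat.div_add_mod]
    _ ≤ ‖x ^ q‖ ^ (k / q) * ‖x ^ (k % q)‖ := norm_pow_mul_le _ _ _
    _ ≤ (1 / 2) ^ (k / q) * S := by gcongr
    _ ≤ 2 * ρ ^ k * S := by gcongr
    _ = 2 * S * ρ ^ k := by ring

end NormedRing

theorem tendsto_mul_exp_add_div_exp_sub_one (K L : ℝ) {ρ : ℝ} (hρ : ρ < 1) :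
    Tendsto (fun c => (K * Real.exp (ρ * c) + L) / (Real.exp c - 1)) atTop (𝓝 0) := by
  have hdecay : ∀ {r : ℝ}, r < 0 → Tendsto (fun c => Real.exp (r * c)) atTop (𝓝 0) := fun hr =>
    Real.tendsto_exp_atBot.comp (tendsto_id.const_mul_atTop_of_neg hr)
  have hlim : Tendsto (fun c => (K * Real.exp ((ρ - 1) * c) + L * Real.exp (-1 * c))
      / (1 - Real.exp (-1 * c))) atTop (𝓝 ((K * 0 + L * 0) / (1 - 0))) :=
    (((hdecay (by linarith)).const_mul K).add ((hdecay (by norm_num)).const_mul L)).div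
      (tendsto_const_nhds.sub (hdecay (by norm_num))) (by norm_num)
  rw [mul_zero, mul_zero, add_zero, zero_div] at hlim
  refine hlim.congr' ?_
  filter_upwards [eventually_gt_atTop 0] with c hc
  have hden : Real.exp c - 1 ≠ 0 := (sub_pos.2 (Real.one_lt_exp_iff.2 hc)).ne'
  rw [sub_mul, one_mul, Real.exp_sub, neg_one_mul, Real.exp_neg]
  field_simp

section NormedAlgebra

variable {𝔸 : Type*} [NormedRing 𝔸] [NormedAlgebra ℝ 𝔸]

open NormedSpace

theorem norm_exp_smul_le_of_norm_pow_le {x : 𝔸} {K ρ : ℝ} (hx : ∀ k, ‖x ^ k‖ ≤ K * ρ ^ k)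
    {c : ℝ} (hc : 0 ≤ c) : ‖exp (c • x)‖ ≤ K * Real.exp (ρ * c) := by
  rw [exp_eq_tsum ℝ, Real.exp_eq_exp_ℝ]
  refine tsum_of_norm_bounded ((expSeries_div_hasSum_exp (ρ * c)).mul_left K) fun k => ?_
  rw [smul_pow, norm_smul, norm_smul, norm_inv, Real.norm_natCast, Real.norm_eq_abs,
    abs_pow, abs_of_nonneg hc]
  calc (k.factorial : ℝ)⁻¹ * (c ^ k * ‖x ^ k‖)
      ≤ (k.factorial : ℝ)⁻¹ * (c ^ k * (K * ρ ^ k)) := by gcongr; exact hx k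
    _ = K * ((ρ * c) ^ k / k.factorial) := by ring

theorem exp_smul_of_isIdempotentElem {p : 𝔸} (hp : IsIdempotentElem p) (c : ℝ) :
    exp (c • p) = 1 + (Real.exp c - 1) • p := by
  have hterm : ∀ k : ℕ, (k.factorial : ℝ)⁻¹ • (c • p) ^ k
      = (c ^ k / k.factorial) • p + if k = 0 then 1 - p else 0 := by
    rintro (_ | k)
    · simp
    · rw [smul_pow, hp.pow_succ_eq, smul_smul, if_neg k.succ_ne_zero, add_zero, div_eq_inv_mul]
  have hsum : HasSum (fun k : ℕ => (k.factorial : ℝ)⁻¹ • (c • p) ^ k)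
      (Real.exp c • p + (1 - p)) := by
    simp only [hterm]
    rw [Real.exp_eq_exp_ℝ]
    exact ((expSeries_div_hasSum_exp c).smul_const p).add (hasSum_ite_eq 0 (1 - p))
  simp only [exp_eq_tsum ℝ]
  rw [hsum.tsum_eq, sub_smul, one_smul]
  abel

theorem mul_exp_smul_of_mul_eq_zero [CompleteSpace 𝔸] {p n : 𝔸} (h : p * n = 0) (c : ℝ) :
    p * exp (c • n) = p := by
  rw [exp_eq_tsum ℝ, ← (expSeries_summable' (𝕂 := ℝ) (c • n)).tsum_mul_left, tsum_eq_single 0]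
  · simp
  · rintro (_ | k) hk
    · exact absurd rfl hk
    · rw [mul_smul_comm, smul_pow, mul_smul_comm, pow_succ' n, ← mul_assoc, h, zero_mul,
        smul_zero, smul_zero]

theorem exp_smul_sub_one_eq [CompleteSpace 𝔸] {a p : 𝔸} (hap : a * p = p) (hpa : p * a = p)
    (hp : IsIdempotentElem p) (c : ℝ) :
    exp (c • a) - 1 = (Real.exp c - 1) • p + (exp (c • (a - p)) - 1) := by
  let +nondep : NormedAlgebra ℚ 𝔸 := .restrictScalars ℚ ℝ 𝔸
  have hpn : p * (a - p) = 0 := by rw [mul_sub, hpa, hp.eq, sub_self]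
  have hnp : (a - p) * p = 0 := by rw [sub_mul, hap, hp.eq, sub_self]
  have hcomm : Commute (c • p) (c • (a - p)) := by
    simp only [Commute, SemiconjBy, smul_mul_smul_comm, hpn, hnp]
  rw [show c • a = c • p + c • (a - p) by rw [← smul_add, add_sub_cancel],
    NormedSpace.exp_add_of_commute hcomm,
    exp_smul_of_isIdempotentElem hp, add_mul, one_mul, smul_mul_assoc,
    mul_exp_smul_of_mul_eq_zero hpn]
  abel

theorem tendsto_exp_smul_sub_one_div_of_tendsto_pow [CompleteSpace 𝔸] {a p : 𝔸}
    (h : Tendsto (a ^ ·) atTop (𝓝 p)) :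
    Tendsto (fun c : ℝ => (Real.exp c - 1)⁻¹ • (exp (c • a) - 1)) atTop (𝓝 p) := by
  obtain ⟨K, ρ, hρ, hpow⟩ :=
    exists_norm_pow_le_geometric_of_tendsto_pow_zero (tendsto_sub_pow_zero_of_tendsto_pow h)
  have hdecomp : ∀ᶠ c in atTop, p + (Real.exp c - 1)⁻¹ • (exp (c • (a - p)) - 1)
      = (Real.exp c - 1)⁻¹ • (exp (c • a) - 1) := by
    filter_upwards [eventually_gt_atTop 0] with c hc
    have hden : Real.exp c - 1 ≠ 0 := (sub_pos.2 (Real.one_lt_exp_iff.2 hc)).ne'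
    rw [exp_smul_sub_one_eq (mul_eq_of_tendsto_pow h) (mul_eq_of_tendsto_pow' h)
      (isIdempotentElem_of_tendsto_pow h), smul_add, smul_smul, inv_mul_cancel₀ hden, one_smul]
  have hrem : Tendsto (fun c : ℝ => (Real.exp c - 1)⁻¹ • (exp (c • (a - p)) - 1))
      atTop (𝓝 0) := by
    refine squeeze_zero_norm' ?_ (tendsto_mul_exp_add_div_exp_sub_one K ‖(1 : 𝔸)‖ hρ)
    filter_upwards [eventually_gt_atTop 0] with c hc
    have hden : 0 < Real.exp c - 1 := sub_pos.2 (Real.one_lt_exp_iff.2 hc)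
    rw [norm_smul, norm_inv, Real.norm_of_nonneg hden.le, inv_mul_eq_div]
    gcongr
    exact (norm_sub_le _ _).trans (by gcongr; exact norm_exp_smul_le_of_norm_pow_le hpow hc.le)
  simpa using (tendsto_const_nhds.add hrem).congr' hdecomp

end NormedAlgebra

theorem stmt5_general (H : ℕ) (A Mbar : Matrix (Fin H) (Fin H) ℝ)
    (hconv : ∀ i j, Tendsto (fun μ : ℕ => (A ^ μ) i j) atTop (nhds (Mbar i j)))
    (d : Fin H → ℝ) (hd : ∀ i, 0 < d i)
    (ms t₀ : ℝ) (hms : ms ∈ Set.Ioo (0 : ℝ) 1) (ht₀ : 0 < t₀) (i j : Fin H) :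
    Tendsto (fun t : ℝ =>
        ((NormedSpace.exp
            ((ms * Real.log (t / t₀)) • (Matrix.diagonal d * A * (Matrix.diagonal d)⁻¹)) - 1) i j)
          / ((t / t₀) ^ ms - 1))
      atTop (nhds ((Matrix.diagonal d * Mbar * (Matrix.diagonal d)⁻¹) i j)) := by
  -- Any submultiplicative norm inducing the entrywise topology will do here.
  let _ := Matrix.linftyOpNormedRing (n := Fin H) (α := ℝ)
  let _ := Matrix.linftyOpNormedAlgebra (R := ℝ) (n := Fin H) (α := ℝ)
  have hD : IsUnit (diagonal d).det := by
    simpa [det_diagonal] using (Finset.prod_pos fun k _ => hd k).ne'.isUnit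
  have hpow : Tendsto (fun μ : ℕ => (diagonal d * A * (diagonal d)⁻¹) ^ μ) atTop
      (𝓝 (diagonal d * Mbar * (diagonal d)⁻¹)) := by
    have hA : Tendsto (A ^ ·) atTop (𝓝 Mbar) :=
      tendsto_pi_nhds.2 fun i => tendsto_pi_nhds.2 (hconv i)
    have hconj (μ : ℕ) : (diagonal d * A * (diagonal d)⁻¹) ^ μ
        = diagonal d * A ^ μ * (diagonal d)⁻¹ := Units.conj_pow (nonsingInvUnit _ hD) A μ
    simpa only [hconj] using (hA.const_mul (diagonal d)).mul_const (diagonal d)⁻¹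
  have hc : Tendsto (fun t => ms * Real.log (t / t₀)) atTop atTop :=
    (Real.tendsto_log_atTop.comp (tendsto_id.atTop_div_const ht₀)).const_mul_atTop hms.1
  refine (((continuous_apply j).comp (continuous_apply i)).tendsto _ |>.comp
    ((tendsto_exp_smul_sub_one_div_of_tendsto_pow hpow).comp hc)).congr' ?_
  filter_upwards [eventually_gt_atTop 0] with t ht
  rw [Real.rpow_def_of_pos (div_pos ht ht₀), mul_comm (Real.log _), div_eq_inv_mul]
  rfl

/-- Long-run integration: the normalized type-by-type in-degree matrix
`[exp(m_s·log(t/t₀)·(Q·A·Q⁻¹)) − I] / ((t/t₀)^{m_s} − 1)` converges entrywise to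
`Q·M̄·Q⁻¹` as `t → ∞`. -/
theorem stmt5 (H : ℕ) (hH : 1 ≤ H) (A Mbar : Matrix (Fin H) (Fin H) ℝ)
    (hpos : ∀ i j, 0 < A i j) (hrow : ∀ i, ∑ j, A i j = 1)
    (hconv : ∀ i j, Tendsto (fun μ : ℕ => (A ^ μ) i j) atTop (nhds (Mbar i j)))
    (d : Fin H → ℝ) (hd : ∀ i, 0 < d i)
    (ms t₀ : ℝ) (hms : ms ∈ Set.Ioo (0 : ℝ) 1) (ht₀ : 0 < t₀) (i j : Fin H) :
    Tendsto (fun t : ℝ =>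
        ((NormedSpace.exp
            ((ms * Real.log (t / t₀)) • (Matrix.diagonal d * A * (Matrix.diagonal d)⁻¹)) - 1) i j)
          / ((t / t₀) ^ ms - 1))
      atTop (nhds ((Matrix.diagonal d * Mbar * (Matrix.diagonal d)⁻¹) i j)) :=
  stmt5_general H A Mbar hconv d hd ms t₀ hms ht₀ i j
end

section
/- Let p₁, p₂ be real numbers with p₁ + p₂ ≠ 2, set b = p₁ + p₂ − 1, and let M be the 2×2 real matrix with rows (p₁, 1−p₁) and (1−p₂, p₂). Then for every real x, exp(x·M) equals (2 − p₁ − p₂)⁻¹ times the 2×2 matrix with rows ( (1−p₂)·eˣ + (1−p₁)·e^{bx} , (1−p₁)·(eˣ − e^{bx}) ) and ( (1−p₂)·(eˣ − e^{bx}) , (1−p₁)·eˣ + (1−p₂)·e^{bx} ). -/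
/-!
Write `P` for the rank-one matrix whose rows are both the stationary distribution
`((1 - p₂), (1 - p₁)) / (2 - p₁ - p₂)` of `M`. Then `P` is idempotent and
`M = P + b • (1 - P)`. For an idempotent `P` the map `(a, b) ↦ a • P + b • (1 - P)` is a continuous
algebra homomorphism out of `ℝ × ℝ`, where `exp` acts coordinatewise, so
`exp (x • M) = eˣ • P + e^{bx} • (1 - P)`.
-/

open Matrix

namespace IsIdempotentElem

variable {R A : Type*} [CommRing R] [Ring A] [Algebra R A] {P : A}

def prodAlgHom (hP : IsIdempotentElem P) : R × R →ₐ[R] A where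
  toFun v := v.1 • P + v.2 • (1 - P)
  map_one' := by simp
  map_mul' v w := by
    have h₁ : P * (1 - P) = 0 := by rw [mul_sub, mul_one, hP.eq, sub_self]
    have h₂ : (1 - P) * P = 0 := by rw [sub_mul, one_mul, hP.eq, sub_self]
    simp only [Prod.fst_mul, Prod.snd_mul, add_mul, mul_add, smul_mul_smul_comm, hP.eq,
      hP.one_sub.eq, h₁, h₂, smul_zero, add_zero, zero_add, mul_smul]
  map_zero' := by simp
  map_add' v w := by simp only [Prod.fst_add, Prod.snd_add, add_smul]; abel
  commutes' r := by simp [Algebra.algebraMap_eq_smul_one, ← smul_add]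

end IsIdempotentElem

theorem NormedSpace.exp_smul_add_smul_one_sub {𝔸 : Type*} [NormedRing 𝔸] [NormedAlgebra ℝ 𝔸]
    [Algebra ℚ 𝔸] {P : 𝔸} (hP : IsIdempotentElem P) (a b : ℝ) :
    NormedSpace.exp (a • P + b • (1 - P)) = Real.exp a • P + Real.exp b • (1 - P) := by
  have hcont : Continuous (hP.prodAlgHom (R := ℝ)) := by
    show Continuous fun v : ℝ × ℝ => v.1 • P + v.2 • (1 - P)
    fun_prop
  have := NormedSpace.map_exp (hP.prodAlgHom (R := ℝ)) hcont (a, b)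
  simpa [IsIdempotentElem.prodAlgHom, Real.exp_eq_exp_ℝ] using this.symm

section StationaryProj

variable (p₁ p₂ : ℝ)

noncomputable def stationaryProj : Matrix (Fin 2) (Fin 2) ℝ :=
  (2 - p₁ - p₂)⁻¹ • !![1 - p₂, 1 - p₁; 1 - p₂, 1 - p₁]

variable {p₁ p₂}

theorem isIdempotentElem_stationaryProj (h : p₁ + p₂ ≠ 2) :
    IsIdempotentElem (stationaryProj p₁ p₂) := by
  have hc : 2 - p₁ - p₂ ≠ 0 := by contrapose! h; linarith
  unfold IsIdempotentElem stationaryProj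
  ext i j
  fin_cases i <;> fin_cases j <;>
    simp only [Matrix.mul_apply, Fin.sum_univ_two, Matrix.smul_apply, of_apply, cons_val', cons_val_zero,
      cons_val_one, cons_val_fin_one, Fin.zero_eta, Fin.mk_one, Fin.isValue, smul_eq_mul] <;>
    field_simp <;> ring

theorem fin_two_stochastic_eq_stationaryProj_add_smul (h : p₁ + p₂ ≠ 2) :
    !![p₁, 1 - p₁; 1 - p₂, p₂] =
      stationaryProj p₁ p₂ + (p₁ + p₂ - 1) • (1 - stationaryProj p₁ p₂) := by
  have hc : 2 - p₁ - p₂ ≠ 0 := by contrapose! h; linarith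
  unfold stationaryProj
  ext i j
  fin_cases i <;> fin_cases j <;>
    simp only [one_fin_two, Matrix.add_apply, Matrix.sub_apply, Matrix.smul_apply, of_apply, cons_val',
      cons_val_zero, cons_val_one, cons_val_fin_one, Fin.zero_eta, Fin.mk_one, Fin.isValue, smul_eq_mul] <;>
    field_simp <;> ring

end StationaryProj

/-- Explicit formula for the exponential of a `2×2` matrix with rows `(p₁, 1−p₁)` and
`(1−p₂, p₂)`, where `b = p₁ + p₂ − 1` and `p₁ + p₂ ≠ 2`. -/
theorem stmt10 (p₁ p₂ : ℝ) (h : p₁ + p₂ ≠ 2) (x : ℝ) :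
    NormedSpace.exp (x • (!![p₁, 1 - p₁; 1 - p₂, p₂] : Matrix (Fin 2) (Fin 2) ℝ)) =
      (2 - p₁ - p₂)⁻¹ •
        !![(1 - p₂) * Real.exp x + (1 - p₁) * Real.exp ((p₁ + p₂ - 1) * x),
             (1 - p₁) * (Real.exp x - Real.exp ((p₁ + p₂ - 1) * x));
           (1 - p₂) * (Real.exp x - Real.exp ((p₁ + p₂ - 1) * x)),
             (1 - p₁) * Real.exp x + (1 - p₂) * Real.exp ((p₁ + p₂ - 1) * x)] := by
  -- `exp` only depends on the topology, so any matrix norm will do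
  let := Matrix.linftyOpNormedRing (n := Fin 2) (α := ℝ)
  let := Matrix.linftyOpNormedAlgebra (n := Fin 2) (R := ℝ) (α := ℝ)
  have hc : 2 - p₁ - p₂ ≠ 0 := by contrapose! h; linarith
  rw [fin_two_stochastic_eq_stationaryProj_add_smul h, smul_add, smul_smul, mul_comm]
  refine (NormedSpace.exp_smul_add_smul_one_sub (isIdempotentElem_stationaryProj h) _ _).trans ?_
  unfold stationaryProj
  ext i j
  fin_cases i <;> fin_cases j <;>
    simp only [one_fin_two, Matrix.add_apply, Matrix.sub_apply, Matrix.smul_apply, of_apply, cons_val',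
      cons_val_zero, cons_val_one, cons_val_fin_one, Fin.zero_eta, Fin.mk_one, Fin.isValue, smul_eq_mul] <;>
    field_simp <;> ring
end

section
/- Let 0 < p < 1, 0 < b < 1, and c > 0. Define r(k) = p + (1−p)·((1+c·k)^b − 1)/(c·k) for k > 0. Then: (1) r is strictly decreasing on (0, ∞); (2) r is strictly convex on (0, ∞); (3) r(k) → p as k → +∞. -/
/-!
With `F x = ((1 + x) ^ b - 1) / x` we have `r k = p + (1 - p) * F (c * k)`, so everything reduces
to `F`. Since `F x` is the slope of the secant of the strictly concave `y ↦ y ^ b` over `[1, 1 + x]`,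
it exceeds the tangent slope `b * (1 + x) ^ (b - 1)` at the right end, and this is exactly
`F' < 0`. Strict convexity comes from `x ^ 3 * F'' x > 0`, a second-order Taylor inequality that
holds because the third derivative of `y ↦ y ^ b` is positive. The limit follows from
`0 ≤ F x ≤ x ^ (b - 1)`, by subadditivity of `y ↦ y ^ b`.
-/

open Filter Set

noncomputable def rpowSecantSlope (b x : ℝ) : ℝ := ((1 + x) ^ b - 1) / x

noncomputable def rpowSecantSlopeDeriv (b x : ℝ) : ℝ :=
  (b * (1 + x) ^ (b - 1) - rpowSecantSlope b x) / x

/-- Twice the amount by which the second-order Taylor polynomial of `y ↦ y ^ b` at `1 + x`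
overshoots `1 ^ b` at `1`. -/
noncomputable def rpowTaylorGap (b x : ℝ) : ℝ :=
  x ^ 2 * (b * (b - 1) * (1 + x) ^ (b - 2)) - 2 * x * (b * (1 + x) ^ (b - 1))
    + 2 * ((1 + x) ^ b - 1)

lemma hasDerivAt_one_add_rpow (e : ℝ) {x : ℝ} (hx : 0 < 1 + x) :
    HasDerivAt (fun t : ℝ => (1 + t) ^ e) (e * (1 + x) ^ (e - 1)) x := by
  simpa using ((hasDerivAt_id x).const_add 1).rpow_const (Or.inl hx.ne')

lemma hasDerivAt_rpowSecantSlope (b : ℝ) {x : ℝ} (hx : 0 < x) :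
    HasDerivAt (rpowSecantSlope b) (rpowSecantSlopeDeriv b x) x := by
  refine (((hasDerivAt_one_add_rpow b (by linarith)).sub_const 1).div
    (hasDerivAt_id x) hx.ne').congr_deriv ?_
  rw [rpowSecantSlopeDeriv, rpowSecantSlope, id]
  field_simp

lemma hasDerivAt_rpowSecantSlopeDeriv (b : ℝ) {x : ℝ} (hx : 0 < x) :
    HasDerivAt (rpowSecantSlopeDeriv b) (rpowTaylorGap b x / x ^ 3) x := by
  have h : HasDerivAt (rpowSecantSlopeDeriv b)
      (((b * ((b - 1) * (1 + x) ^ (b - 1 - 1)) - rpowSecantSlopeDeriv b x) * x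
        - (b * (1 + x) ^ (b - 1) - rpowSecantSlope b x) * 1) / x ^ 2) x :=
    (((hasDerivAt_one_add_rpow (b - 1) (by linarith)).const_mul b).sub
      (hasDerivAt_rpowSecantSlope b hx)).div (hasDerivAt_id x) hx.ne'
  convert h using 1
  rw [rpowTaylorGap, rpowSecantSlopeDeriv, rpowSecantSlope, show b - 1 - 1 = b - 2 by ring]
  field_simp
  ring

lemma hasDerivAt_rpowTaylorGap (b : ℝ) {x : ℝ} (hx : 0 < 1 + x) :
    HasDerivAt (rpowTaylorGap b) (x ^ 2 * (b * (b - 1) * (b - 2) * (1 + x) ^ (b - 3))) x := by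
  refine ((((hasDerivAt_pow 2 x).mul
      ((hasDerivAt_one_add_rpow (b - 2) hx).const_mul (b * (b - 1)))).sub
    (((hasDerivAt_id x).const_mul 2).mul ((hasDerivAt_one_add_rpow (b - 1) hx).const_mul b))).add
      (((hasDerivAt_one_add_rpow b hx).sub_const 1).const_mul 2)).congr_deriv ?_
  rw [show b - 2 - 1 = b - 3 by ring, show b - 1 - 1 = b - 2 by ring]
  simp only [id, Nat.cast_ofNat]
  ring

section

variable {b : ℝ}

lemma mul_one_add_rpow_sub_one_lt_rpowSecantSlope (hb₀ : 0 < b) (hb₁ : b < 1) {x : ℝ}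
    (hx : 0 < x) : b * (1 + x) ^ (b - 1) < rpowSecantSlope b x := by
  have h := (Real.strictConcaveOn_rpow hb₀ hb₁).lt_slope_of_hasDerivAt
    (x := 1) (y := 1 + x) (by simp) (by simp; linarith) (by linarith)
    (Real.hasDerivAt_rpow_const (Or.inl (by linarith)))
  simpa [slope_def_field, rpowSecantSlope] using h

lemma rpowSecantSlopeDeriv_neg (hb₀ : 0 < b) (hb₁ : b < 1) {x : ℝ} (hx : 0 < x) :
    rpowSecantSlopeDeriv b x < 0 :=
  div_neg_of_neg_of_pos (sub_neg.2 (mul_one_add_rpow_sub_one_lt_rpowSecantSlope hb₀ hb₁ hx)) hx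

lemma strictAntiOn_rpowSecantSlope (hb₀ : 0 < b) (hb₁ : b < 1) :
    StrictAntiOn (rpowSecantSlope b) (Ioi 0) := by
  refine strictAntiOn_of_deriv_neg (convex_Ioi 0)
    (fun x hx => (hasDerivAt_rpowSecantSlope b hx).continuousAt.continuousWithinAt) ?_
  rw [interior_Ioi]
  intro x hx
  rw [(hasDerivAt_rpowSecantSlope b hx).deriv]
  exact rpowSecantSlopeDeriv_neg hb₀ hb₁ hx

lemma rpowTaylorGap_pos (hb : 0 < b * (b - 1) * (b - 2)) {x : ℝ} (hx : 0 < x) :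
    0 < rpowTaylorGap b x := by
  have hmono : StrictMonoOn (rpowTaylorGap b) (Ici 0) := by
    refine strictMonoOn_of_deriv_pos (convex_Ici 0) (fun t ht =>
      (hasDerivAt_rpowTaylorGap b (by linarith [ht.out])).continuousAt.continuousWithinAt) ?_
    rw [interior_Ici]
    intro t ht
    have ht₁ : 0 < 1 + t := by linarith [ht.out]
    rw [(hasDerivAt_rpowTaylorGap b ht₁).deriv]
    exact mul_pos (pow_pos ht 2) (mul_pos hb (Real.rpow_pos_of_pos ht₁ _))
  simpa [rpowTaylorGap] using hmono self_mem_Ici hx.le hx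

lemma strictMonoOn_rpowSecantSlopeDeriv (hb : 0 < b * (b - 1) * (b - 2)) :
    StrictMonoOn (rpowSecantSlopeDeriv b) (Ioi 0) := by
  refine strictMonoOn_of_deriv_pos (convex_Ioi 0)
    (fun x hx => (hasDerivAt_rpowSecantSlopeDeriv b hx).continuousAt.continuousWithinAt) ?_
  rw [interior_Ioi]
  intro x hx
  rw [(hasDerivAt_rpowSecantSlopeDeriv b hx).deriv]
  exact div_pos (rpowTaylorGap_pos hb hx) (pow_pos hx 3)

lemma strictConvexOn_rpowSecantSlope (hb : 0 < b * (b - 1) * (b - 2)) :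
    StrictConvexOn ℝ (Ioi 0) (rpowSecantSlope b) := by
  refine StrictMonoOn.strictConvexOn_of_deriv (convex_Ioi 0)
    (fun x hx => (hasDerivAt_rpowSecantSlope b hx).continuousAt.continuousWithinAt) ?_
  rw [interior_Ioi]
  refine (strictMonoOn_rpowSecantSlopeDeriv hb).congr fun x hx => ?_
  exact ((hasDerivAt_rpowSecantSlope b hx).deriv).symm

lemma tendsto_rpowSecantSlope_atTop (hb₀ : 0 ≤ b) (hb₁ : b < 1) :
    Tendsto (rpowSecantSlope b) atTop (nhds 0) := by
  have hpow : Tendsto (fun x : ℝ => x ^ (b - 1)) atTop (nhds 0) := by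
    simpa using tendsto_rpow_neg_atTop (sub_pos.2 hb₁)
  refine tendsto_of_tendsto_of_tendsto_of_le_of_le' tendsto_const_nhds hpow ?_ ?_
  all_goals filter_upwards [eventually_gt_atTop 0] with x hx
  · exact div_nonneg (sub_nonneg.2 (Real.one_le_rpow (by linarith) hb₀)) hx.le
  · calc rpowSecantSlope b x ≤ x ^ b / x := by
          refine div_le_div_of_nonneg_right ?_ hx.le
          have := Real.rpow_add_le_add_rpow zero_le_one hx.le hb₀ hb₁.le
          rw [Real.one_rpow] at this
          linarith
      _ = x ^ (b - 1) := (Real.rpow_sub_one hx.ne' b).symm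

end

lemma StrictConvexOn.const_add_mul_comp_mul_Ioi {f : ℝ → ℝ} (hf : StrictConvexOn ℝ (Ioi 0) f)
    (p : ℝ) {q c : ℝ} (hq : 0 < q) (hc : 0 < c) :
    StrictConvexOn ℝ (Ioi 0) fun k => p + q * f (c * k) := by
  refine ⟨convex_Ioi 0, fun x hx y hy hxy a a' ha ha' haa' => ?_⟩
  have hfc := hf.2 (mul_pos hc hx) (mul_pos hc hy) (mt (mul_left_cancel₀ hc.ne') hxy) ha ha' haa'
  simp only [smul_eq_mul] at hfc ⊢
  rw [show c * (a * x + a' * y) = a * (c * x) + a' * (c * y) by ring]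
  have hp : p = a * p + a' * p := by rw [← add_mul, haa', one_mul]
  nlinarith [mul_lt_mul_of_pos_left hfc hq]

/-- The same-type share `r(k) = p + (1−p)·((1+ck)^b − 1)/(ck)` is strictly decreasing,
strictly convex on `(0, ∞)`, and converges to `p` as `k → ∞`. -/
theorem stmt11 (p b c : ℝ) (hp : p ∈ Set.Ioo (0 : ℝ) 1) (hb : b ∈ Set.Ioo (0 : ℝ) 1)
    (hc : 0 < c) :
    let r : ℝ → ℝ := fun k => p + (1 - p) * (((1 + c * k) ^ b - 1) / (c * k))
    StrictAntiOn r (Set.Ioi 0) ∧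
    StrictConvexOn ℝ (Set.Ioi 0) r ∧
    Tendsto r atTop (nhds p) := by
  intro r
  obtain ⟨hb₀, hb₁⟩ := hb
  have hq : 0 < 1 - p := sub_pos.2 hp.2
  have hr : r = fun k => p + (1 - p) * rpowSecantSlope b (c * k) := rfl
  refine ⟨fun k₁ hk₁ k₂ hk₂ hk => ?_, ?_, ?_⟩
  · have := strictAntiOn_rpowSecantSlope hb₀ hb₁ (mul_pos hc hk₁) (mul_pos hc hk₂)
      (mul_lt_mul_of_pos_left hk hc)
    simp only [hr]
    gcongr
  · rw [hr]
    refine (strictConvexOn_rpowSecantSlope ?_).const_add_mul_comp_mul_Ioi p hq hc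
    exact mul_pos_of_neg_of_neg (mul_neg_of_pos_of_neg hb₀ (by linarith)) (by linarith)
  · rw [hr]
    simpa using ((tendsto_rpowSecantSlope_atTop hb₀.le hb₁).comp
      (tendsto_id.const_mul_atTop hc)).const_mul (1 - p) |>.const_add p
end

section
/- Let p ∈ (1/2, 1), b ∈ [0, 1), and m ∈ (0, 1]. Define ψ(x) = p(1−p)·(x^m − x^{b·m}) − (1−p)·((1−p)·x^m + p·x^{b·m} − 1) for x ≥ 1. Then ψ(x) ≥ 0 for all x ≥ 1 if and only if b ≤ (2p−1)/(2p). -/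
/-! Writing `y = x ^ m` and `c = (2p - 1) / (2p)`, one has `ψ = 2p(1 - p)(c y + (1 - c) - y ^ b)`,
and `x ↦ x ^ m` maps `[1, ∞)` onto itself. So the claim is that the linear bound
`y ^ b ≤ c y + (1 - c)` holds on `[1, ∞)` iff `b ≤ c`. If `b ≤ c`, then `y ^ b ≤ y ^ c`, and
`y ^ c` lies below its tangent line at `1` by concavity (Bernoulli). Conversely, the difference
vanishes at `1` and is minimal there, so its right derivative `c - b` at `1` is nonnegative. -/

open Set

theorem HasDerivWithinAt.nonneg_of_isMinOn_Ici {f : ℝ → ℝ} {f' a : ℝ}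
    (hf : HasDerivWithinAt f f' (Ici a) a) (hmin : IsMinOn f (Ici a) a) : 0 ≤ f' := by
  have hcone : (1 : ℝ) ∈ posTangentConeAt (Ici a) a :=
    mem_posTangentConeAt_of_segment_subset (by
      rw [segment_eq_Icc (by linarith)]
      exact Icc_subset_Ici_self)
  simpa using hmin.localize.hasFDerivWithinAt_nonneg hf.hasFDerivWithinAt hcone

namespace Real

theorem forall_one_le_rpow_iff {m : ℝ} (hm : 0 < m) (P : ℝ → Prop) :
    (∀ x : ℝ, 1 ≤ x → P (x ^ m)) ↔ ∀ y : ℝ, 1 ≤ y → P y := by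
  refine ⟨fun h y hy => ?_, fun h x hx => h _ (one_le_rpow hx hm.le)⟩
  simpa [rpow_inv_rpow (by linarith : (0 : ℝ) ≤ y) hm.ne'] using
    h (y ^ m⁻¹) (one_le_rpow hy (inv_nonneg.mpr hm.le))

theorem rpow_le_mul_add_one_sub {b c y : ℝ} (hc₀ : 0 ≤ c) (hc₁ : c ≤ 1) (hbc : b ≤ c)
    (hy : 1 ≤ y) : y ^ b ≤ c * y + (1 - c) :=
  calc y ^ b ≤ y ^ c := rpow_le_rpow_of_exponent_le hy hbc
    _ = (1 + (y - 1)) ^ c := by rw [add_sub_cancel]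
    _ ≤ 1 + c * (y - 1) := rpow_one_add_le_one_add_mul_self (by linarith) hc₀ hc₁
    _ = c * y + (1 - c) := by ring

theorem le_of_forall_rpow_le_mul_add_one_sub {b c : ℝ}
    (h : ∀ y : ℝ, 1 ≤ y → y ^ b ≤ c * y + (1 - c)) : b ≤ c := by
  have hderiv : HasDerivAt (fun y : ℝ => c * y + (1 - c) - y ^ b) (c * 1 - b * 1 ^ (b - 1)) 1 :=
    (((hasDerivAt_id' 1).const_mul c).add_const (1 - c)).fun_sub
      (hasDerivAt_rpow_const (Or.inl one_ne_zero))
  have hmin : IsMinOn (fun y : ℝ => c * y + (1 - c) - y ^ b) (Ici 1) 1 := fun y hy => by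
    simpa using h y hy
  simpa using hderiv.hasDerivWithinAt.nonneg_of_isMinOn_Ici hmin

theorem forall_rpow_le_mul_add_one_sub_iff {b c : ℝ} (hc₀ : 0 ≤ c) (hc₁ : c ≤ 1) :
    (∀ y : ℝ, 1 ≤ y → y ^ b ≤ c * y + (1 - c)) ↔ b ≤ c :=
  ⟨le_of_forall_rpow_le_mul_add_one_sub, fun hbc _ hy => rpow_le_mul_add_one_sub hc₀ hc₁ hbc hy⟩

end Real

theorem stmt15_general (p b m : ℝ) (hp : p ∈ Set.Ioo (1 / 2 : ℝ) 1)
    (hm : m ∈ Set.Ioc (0 : ℝ) 1) :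
    (∀ x : ℝ, 1 ≤ x →
        0 ≤ p * (1 - p) * (x ^ m - x ^ (b * m))
              - (1 - p) * ((1 - p) * x ^ m + p * x ^ (b * m) - 1)) ↔
      b ≤ (2 * p - 1) / (2 * p) := by
  obtain ⟨hp₁, hp₂⟩ := hp
  set c := (2 * p - 1) / (2 * p)
  have h2p : 0 < 2 * p := by linarith
  have hc₀ : 0 ≤ c := div_nonneg (by linarith) h2p.le
  have hc₁ : c ≤ 1 := by rw [div_le_one h2p]; linarith
  have hψ : ∀ y z : ℝ, p * (1 - p) * (y - z) - (1 - p) * ((1 - p) * y + p * z - 1)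
      = (1 - p) * (2 * p) * (c * y + (1 - c) - z) := fun y z => by
    simp only [c]; field_simp; ring
  rw [← Real.forall_rpow_le_mul_add_one_sub_iff hc₀ hc₁,
    ← Real.forall_one_le_rpow_iff hm.1 (fun y => y ^ b ≤ c * y + (1 - c))]
  refine forall₂_congr fun x hx => ?_
  rw [mul_comm b m, Real.rpow_mul (by linarith), hψ,
    mul_nonneg_iff_of_pos_left (mul_pos (by linarith) h2p), sub_nonneg]

/-- `ψ(x) = p(1−p)(x^m − x^{bm}) − (1−p)((1−p)x^m + p·x^{bm} − 1)` is nonnegative on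
`[1, ∞)` if and only if `b ≤ (2p−1)/(2p)`. -/
theorem stmt15 (p b m : ℝ) (hp : p ∈ Set.Ioo (1 / 2 : ℝ) 1) (hb : b ∈ Set.Ico (0 : ℝ) 1)
    (hm : m ∈ Set.Ioc (0 : ℝ) 1) :
    (∀ x : ℝ, 1 ≤ x →
        0 ≤ p * (1 - p) * (x ^ m - x ^ (b * m))
              - (1 - p) * ((1 - p) * x ^ m + p * x ^ (b * m) - 1)) ↔
      b ≤ (2 * p - 1) / (2 * p) :=
  stmt15_general p b m hp hm
end

section
/- Let σ > 0 and γ ∈ (1/2, 1). Define IH(p) = (1−2γ)²·σ·p(1−p) / (σ·p(1−p) + (1+(1−2p)²·σ)·γ(1−γ)) for p ∈ [0, 1]. Then: (1) IH(p) = IH(1−p) for all p ∈ [0, 1]; (2) IH(0) = IH(1) = 0; (3) IH is strictly increasing on [0, 1/2] and strictly decreasing on [1/2, 1]; (4) IH is strictly concave on [0, 1]. -/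
/-- Properties of the steady-state relative homophily index
`IH(p) = (1−2γ)²σp(1−p) / (σp(1−p) + (1+(1−2p)²σ)γ(1−γ))`: symmetry around `p = 1/2`,
vanishing at `p = 0, 1`, strict monotonicity on each side of `1/2`, and strict concavity. -/
theorem stmt18 (σ γ : ℝ) (hσ : 0 < σ) (hγ : γ ∈ Set.Ioo (1 / 2 : ℝ) 1) :
    let IH : ℝ → ℝ := fun p =>
      (1 - 2 * γ) ^ 2 * σ * (p * (1 - p))
        / (σ * (p * (1 - p)) + (1 + (1 - 2 * p) ^ 2 * σ) * (γ * (1 - γ)))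
    (∀ p ∈ Set.Icc (0 : ℝ) 1, IH p = IH (1 - p)) ∧
    IH 0 = 0 ∧ IH 1 = 0 ∧
    StrictMonoOn IH (Set.Icc (0 : ℝ) (1 / 2)) ∧
    StrictAntiOn IH (Set.Icc (1 / 2 : ℝ) 1) ∧
    StrictConcaveOn ℝ (Set.Icc (0 : ℝ) 1) IH := by
  obtain ⟨hγ1, hγ2⟩ := hγ
  intro IH
  set B : ℝ := σ * (1 - 2 * γ) ^ 2 with hBdef
  set D : ℝ := (1 + σ) * (γ * (1 - γ)) with hDdef
  have hB : 0 < B := by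
    have h2 : 0 < (1 - 2 * γ) ^ 2 := by nlinarith
    exact mul_pos hσ h2
  have hD : 0 < D := by
    have : 0 < γ * (1 - γ) := mul_pos (by linarith) (by linarith)
    exact mul_pos (by linarith) this
  have hIH : ∀ p : ℝ, IH p = B * (p * (1 - p)) / (B * (p * (1 - p)) + D) := by
    intro p
    show (1 - 2 * γ) ^ 2 * σ * (p * (1 - p))
        / (σ * (p * (1 - p)) + (1 + (1 - 2 * p) ^ 2 * σ) * (γ * (1 - γ)))
        = B * (p * (1 - p)) / (B * (p * (1 - p)) + D)
    have h1 : (1 - 2 * γ) ^ 2 * σ * (p * (1 - p)) = B * (p * (1 - p)) := by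
      rw [hBdef]; ring
    have h2 : σ * (p * (1 - p)) + (1 + (1 - 2 * p) ^ 2 * σ) * (γ * (1 - γ))
        = B * (p * (1 - p)) + D := by
      rw [hBdef, hDdef]; ring
    rw [h1, h2]
  -- positivity of denominators
  have hden : ∀ u : ℝ, 0 ≤ u → 0 < B * u + D := fun u hu =>
    add_pos_of_nonneg_of_pos (mul_nonneg hB.le hu) hD
  -- key monotonicity lemma
  have hmono : ∀ u v : ℝ, 0 ≤ u → u < v →
      B * u / (B * u + D) < B * v / (B * v + D) := by
    intro u v hu huv
    have h1 := hden u hu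
    have h2 := hden v (by linarith)
    rw [div_lt_div_iff₀ h1 h2]
    nlinarith [mul_pos hB hD]
  refine ⟨?_, ?_, ?_, ?_, ?_, ?_⟩
  · intro p _
    rw [hIH, hIH]
    ring_nf
  · rw [hIH]; norm_num
  · rw [hIH]; norm_num
  · intro x hx y hy hxy
    rw [hIH, hIH]
    apply hmono
    · exact mul_nonneg hx.1 (by nlinarith [hx.2])
    · nlinarith [hx.1, hx.2, hy.1, hy.2]
  · intro x hx y hy hxy
    rw [hIH, hIH]
    apply hmono
    · exact mul_nonneg (by linarith [hy.1]) (by linarith [hy.2])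
    · nlinarith [hx.1, hx.2, hy.1, hy.2]
  · refine ⟨convex_Icc 0 1, ?_⟩
    intro x hx y hy hxy a b ha hb hab
    have hb' : b = 1 - a := by linarith
    subst hb'
    simp only [smul_eq_mul]
    rw [hIH, hIH, hIH]
    set u : ℝ := x * (1 - x) with hu
    set v : ℝ := y * (1 - y) with hv
    set w : ℝ := (a * x + (1 - a) * y) * (1 - (a * x + (1 - a) * y)) with hw
    have hu0 : 0 ≤ u := mul_nonneg hx.1 (by linarith [hx.2])
    have hv0 : 0 ≤ v := mul_nonneg hy.1 (by linarith [hy.2])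
    have hw0 : 0 ≤ w := by
      have hz1 : 0 ≤ a * x + (1 - a) * y := by nlinarith [hx.1, hy.1]
      have hz2 : a * x + (1 - a) * y ≤ 1 := by nlinarith [hx.2, hy.2]
      exact mul_nonneg hz1 (by linarith)
    have hP := hden u hu0
    have hQ := hden v hv0
    have hR := hden w hw0
    have hd : 0 < (x - y) ^ 2 := by
      have : x - y ≠ 0 := sub_ne_zero.mpr hxy
      positivity
    have expand : B * w * ((B * u + D) * (B * v + D))
        - (a * (B * u) * (B * v + D) + (1 - a) * (B * v) * (B * u + D)) * (B * w + D)
        = B * a * (1 - a) * (B * D * (u - v) ^ 2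
            + (x - y) ^ 2 * D * (a * (B * v + D) + (1 - a) * (B * u + D))) := by
      rw [hu, hv, hw]; ring
    have hbr : 0 < B * D * (u - v) ^ 2
        + (x - y) ^ 2 * D * (a * (B * v + D) + (1 - a) * (B * u + D)) := by
      have h1 : 0 < a * (B * v + D) + (1 - a) * (B * u + D) :=
        add_pos (mul_pos ha hQ) (mul_pos hb hP)
      have h2 : 0 ≤ B * D * (u - v) ^ 2 :=
        mul_nonneg (mul_nonneg hB.le hD.le) (sq_nonneg _)
      have h3 : 0 < (x - y) ^ 2 * D * (a * (B * v + D) + (1 - a) * (B * u + D)) :=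
        mul_pos (mul_pos hd hD) h1
      linarith
    have key : (a * (B * u) * (B * v + D) + (1 - a) * (B * v) * (B * u + D)) * (B * w + D)
        < B * w * ((B * u + D) * (B * v + D)) := by
      have hpos := mul_pos (mul_pos (mul_pos hB ha) hb) hbr
      linarith [expand]
    have geq : a * (B * u / (B * u + D)) + (1 - a) * (B * v / (B * v + D))
        = (a * (B * u) * (B * v + D) + (1 - a) * (B * v) * (B * u + D))
          / ((B * u + D) * (B * v + D)) := by
      field_simp
    rw [geq, div_lt_div_iff₀ (mul_pos hP hQ) hR]
    exact key
end

section
/- Define IH(p, σ, γ) = (1−2γ)²·σ·p(1−p) / (σ·p(1−p) + (1+(1−2p)²·σ)·γ(1−γ)). Then for every fixed p ∈ (0, 1) and γ ∈ (1/2, 1), the function σ ↦ IH(p, σ, γ) is strictly increasing on (0, ∞); and for every fixed p ∈ (0, 1) and σ > 0, the function γ ↦ IH(p, σ, γ) is strictly increasing on (1/2, 1). -/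
/-- The steady-state relative homophily index
`IH(p, σ, γ) = (1−2γ)²σp(1−p) / (σp(1−p) + (1+(1−2p)²σ)γ(1−γ))` is strictly increasing
in `σ` on `(0, ∞)` and strictly increasing in `γ` on `(1/2, 1)`. -/
theorem stmt19 (p : ℝ) (hp : p ∈ Set.Ioo (0 : ℝ) 1) :
    let IH : ℝ → ℝ → ℝ → ℝ := fun q σ γ =>
      (1 - 2 * γ) ^ 2 * σ * (q * (1 - q))
        / (σ * (q * (1 - q)) + (1 + (1 - 2 * q) ^ 2 * σ) * (γ * (1 - γ)))
    (∀ γ ∈ Set.Ioo (1 / 2 : ℝ) 1, StrictMonoOn (fun σ => IH p σ γ) (Set.Ioi 0)) ∧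
    (∀ σ : ℝ, 0 < σ → StrictMonoOn (fun γ => IH p σ γ) (Set.Ioo (1 / 2 : ℝ) 1)) := by
  intro IH
  obtain ⟨hp0, hp1⟩ := hp
  have hA : 0 < p * (1 - p) := by nlinarith
  have hB : (0:ℝ) ≤ (1 - 2*p)^2 := sq_nonneg _
  constructor
  · intro γ hγ
    obtain ⟨hγ2, hγ1⟩ := hγ
    have hG : 0 < γ * (1 - γ) := by nlinarith
    have hK : 0 < (1 - 2*γ)^2 := by nlinarith
    intro σ1 h1 σ2 h2 hlt
    simp only [Set.mem_Ioi] at h1 h2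
    have hd1 : 0 < σ1 * (p*(1-p)) + (1 + (1-2*p)^2*σ1) * (γ*(1-γ)) := by
      have h := mul_pos h1 hA
      have h' : 0 < (1 + (1-2*p)^2*σ1) * (γ*(1-γ)) :=
        mul_pos (by nlinarith [mul_nonneg hB h1.le]) hG
      linarith
    have hd2 : 0 < σ2 * (p*(1-p)) + (1 + (1-2*p)^2*σ2) * (γ*(1-γ)) := by
      have h := mul_pos h2 hA
      have h' : 0 < (1 + (1-2*p)^2*σ2) * (γ*(1-γ)) :=
        mul_pos (by nlinarith [mul_nonneg hB h2.le]) hG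
      linarith
    show IH p σ1 γ < IH p σ2 γ
    simp only [IH]
    rw [div_lt_div_iff₀ hd1 hd2]
    nlinarith [mul_pos (mul_pos hK hA) (mul_pos hG (sub_pos.mpr hlt))]
  · intro σ hσ γ1 hγ1 γ2 hγ2 hlt
    obtain ⟨ha1, hb1⟩ := hγ1
    obtain ⟨ha2, hb2⟩ := hγ2
    have hG1 : 0 < γ1 * (1 - γ1) := by nlinarith
    have hG2 : 0 < γ2 * (1 - γ2) := by nlinarith
    have hC : 0 < 1 + (1-2*p)^2*σ := by nlinarith [mul_nonneg hB hσ.le]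
    have hd1 : 0 < σ * (p*(1-p)) + (1 + (1-2*p)^2*σ) * (γ1*(1-γ1)) := by
      have h := mul_pos hσ hA
      have h' := mul_pos hC hG1
      linarith
    have hd2 : 0 < σ * (p*(1-p)) + (1 + (1-2*p)^2*σ) * (γ2*(1-γ2)) := by
      have h := mul_pos hσ hA
      have h' := mul_pos hC hG2
      linarith
    have hKlt : (1-2*γ1)^2 < (1-2*γ2)^2 := by nlinarith
    have hGlt : γ2*(1-γ2) < γ1*(1-γ1) := by nlinarith
    have hK1 : 0 < (1-2*γ1)^2 := by nlinarith
    have hKG : (1-2*γ1)^2 * (γ2*(1-γ2)) < (1-2*γ2)^2 * (γ1*(1-γ1)) := by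
      nlinarith [mul_pos hK1 (sub_pos.mpr hGlt), mul_pos (sub_pos.mpr hKlt) hG1]
    show IH p σ γ1 < IH p σ γ2
    simp only [IH]
    rw [div_lt_div_iff₀ hd1 hd2]
    nlinarith [mul_pos (mul_pos hσ hA) (mul_pos (sub_pos.mpr hKlt) (mul_pos hσ hA)),
      mul_pos (mul_pos hσ hA) (mul_pos hC (sub_pos.mpr hKG))]
end
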